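/- arXiv:1308.4088 — 8 statements merged into one kernel-verified Lean document; each statement's English description precedes it below -/
import Mathlib

section
/- Let p be a square-free real polynomial of degree n with roots z_1,...,z_n. Then the root separation σ_p := min_{i≠j} |z_i - z_j| satisfies σ_p ≥ √|Disc(p)| · ‖p‖_2^{-(n-1)} · n^{-(n+2)/2}, where Disc(p) = p_n^{2n-2} ∏_{i<j}(z_j - z_i)^2. -/
/-!
With `a` the leading coefficient and `V` the Vandermonde matrix of the roots,
`√|Disc p| = |a| ^ (n - 1) * |det V|`. Subtracting row `i` from row `j` of `V`, where
`|z i| ≤ |z j|`, leaves the entries `z j ^ t - z i ^ t`, each at most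
`n * M j ^ (n - 1) * |z j - z i|` with `M k = max 1 |z k|`; the other entries of row `k` are at
most `M k ^ (n - 1)`. Hadamard's inequality then gives
`|det V| ≤ n ^ ((n + 2) / 2) * |z i - z j| * ∏ M k ^ (n - 1)`, and `|a| * ∏ M k` is the Mahler
measure of `p`, which Landau's inequality bounds by `‖p‖₂`.
-/

open Polynomial Finset

theorem Matrix.norm_det_le_prod_norm_row {𝕜 : Type*} [RCLike 𝕜] {n : ℕ}
    (A : Matrix (Fin n) (Fin n) 𝕜) :
    ‖A.det‖ ≤ ∏ i, ‖WithLp.toLp 2 (A i)‖ := by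
  -- In the Gram–Schmidt basis `b` of the rows the coordinate matrix of the rows is triangular,
  -- and passing to the standard basis `e` multiplies the determinant by a unit of norm one.
  set v : Fin n → EuclideanSpace 𝕜 (Fin n) := fun i => WithLp.toLp 2 (A i)
  have hdim : Module.finrank 𝕜 (EuclideanSpace 𝕜 (Fin n)) = Fintype.card (Fin n) := by simp
  set b := InnerProductSpace.gramSchmidtOrthonormalBasis hdim v
  set e := EuclideanSpace.basisFun (Fin n) 𝕜
  have hA : e.toBasis.det v = A.det := by
    rw [Module.Basis.det_apply, ← Matrix.det_transpose]
    congr 1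
  calc ‖A.det‖ = ‖e.toBasis.det b.toBasis * b.toBasis.det v‖ := by
        rw [← hA, DFunLike.congr_fun (e.toBasis.det.eq_smul_basis_det b.toBasis) v]
        rfl
    _ = ∏ i, ‖inner 𝕜 (b i) (v i)‖ := by
      rw [norm_mul, OrthonormalBasis.coe_toBasis, OrthonormalBasis.det_to_matrix_orthonormalBasis,
        one_mul, InnerProductSpace.gramSchmidtOrthonormalBasis_det, norm_prod]
    _ ≤ ∏ i, ‖v i‖ := by
      gcongr with i
      simpa [b.orthonormal.1 i] using norm_inner_le_norm (𝕜 := 𝕜) (b i) (v i)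

theorem Matrix.norm_det_le_sqrt_card_pow_mul_prod {𝕜 : Type*} [RCLike 𝕜] {n : ℕ}
    (A : Matrix (Fin n) (Fin n) 𝕜) (c : Fin n → ℝ) (hA : ∀ i j, ‖A i j‖ ≤ c i) :
    ‖A.det‖ ≤ √n ^ n * ∏ i, c i := by
  have hrow : ∀ i, ‖WithLp.toLp 2 (A i)‖ ≤ √n * c i := by
    intro i
    have hc : 0 ≤ c i := (norm_nonneg _).trans (hA i i)
    calc ‖WithLp.toLp 2 (A i)‖ = √(∑ j, ‖A i j‖ ^ 2) := EuclideanSpace.norm_eq _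
      _ ≤ √(∑ _j : Fin n, c i ^ 2) := by gcongr with j; exact hA i j
      _ = √n * c i := by simp [Real.sqrt_mul, Real.sqrt_sq hc]
  calc ‖A.det‖ ≤ ∏ i, ‖WithLp.toLp 2 (A i)‖ := A.norm_det_le_prod_norm_row
    _ ≤ ∏ i, (√n * c i) := by gcongr with i; exact hrow i
    _ = √n ^ n * ∏ i, c i := by rw [prod_mul_distrib, prod_const, card_univ, Fintype.card_fin]

theorem norm_pow_sub_pow_le {R : Type*} [NormedCommRing R] [NormOneClass R] {x y : R} {M : ℝ}
    (hx : ‖x‖ ≤ M) (hy : ‖y‖ ≤ M) (t : ℕ) :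
    ‖x ^ t - y ^ t‖ ≤ t * M ^ (t - 1) * ‖x - y‖ := by
  have hM : 0 ≤ M := (norm_nonneg x).trans hx
  have hterm : ∀ k ∈ range t, ‖x ^ k * y ^ (t - 1 - k)‖ ≤ M ^ (t - 1) := by
    intro k hk
    have hkt : k + (t - 1 - k) = t - 1 := by have := mem_range.1 hk; omega
    calc ‖x ^ k * y ^ (t - 1 - k)‖ ≤ ‖x‖ ^ k * ‖y‖ ^ (t - 1 - k) :=
          (norm_mul_le _ _).trans (mul_le_mul (norm_pow_le _ _) (norm_pow_le _ _)
            (norm_nonneg _) (by positivity))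
      _ ≤ M ^ k * M ^ (t - 1 - k) := by gcongr
      _ = M ^ (t - 1) := by rw [← pow_add, hkt]
  rw [← geom_sum₂_mul, mul_comm]
  calc ‖(x - y) * ∑ k ∈ range t, x ^ k * y ^ (t - 1 - k)‖
      ≤ ‖x - y‖ * ∑ k ∈ range t, ‖x ^ k * y ^ (t - 1 - k)‖ :=
        (norm_mul_le _ _).trans (by gcongr; exact norm_sum_le _ _)
    _ ≤ ‖x - y‖ * ∑ _k ∈ range t, M ^ (t - 1) := by gcongr with k hk; exact hterm k hk
    _ = t * M ^ (t - 1) * ‖x - y‖ := by rw [sum_const, card_range, nsmul_eq_mul]; ring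

theorem Matrix.norm_det_vandermonde_le_of_norm_le {n : ℕ} (z : Fin n → ℂ) {i j : Fin n}
    (hij : i ≠ j) (hle : ‖z i‖ ≤ ‖z j‖) :
    ‖(vandermonde z).det‖ ≤ √n ^ (n + 2) * ‖z j - z i‖ * ∏ k, max 1 ‖z k‖ ^ (n - 1) := by
  set M : Fin n → ℝ := fun k => max 1 ‖z k‖
  have hM : ∀ k, 1 ≤ M k := fun k => le_max_left _ _
  have hzM : ∀ k, ‖z k‖ ≤ M k := fun k => le_max_right _ _
  have hpow : ∀ k, ∀ t : Fin n, M k ^ (t : ℕ) ≤ M k ^ (n - 1) := fun k t =>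
    pow_le_pow_right₀ (hM k) (by omega)
  set W := (vandermonde z).updateRow j (vandermonde z j + (-1 : ℂ) • vandermonde z i)
  have hW : ∀ k t, ‖W k t‖ ≤ (if k = j then n * ‖z j - z i‖ else 1) * M k ^ (n - 1) := by
    intro k t
    by_cases hk : k = j
    · subst hk
      simp only [W, Matrix.updateRow_self, if_true, neg_one_smul, ← sub_eq_add_neg]
      calc ‖z k ^ (t : ℕ) - z i ^ (t : ℕ)‖ ≤ (t : ℕ) * M k ^ ((t : ℕ) - 1) * ‖z k - z i‖ :=
            norm_pow_sub_pow_le (hzM k) (hle.trans (hzM k)) t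
        _ ≤ n * M k ^ (n - 1) * ‖z k - z i‖ := by
            gcongr
            · exact t.is_lt.le
            · exact hM k
            · omega
        _ = n * ‖z k - z i‖ * M k ^ (n - 1) := by ring
    · simp only [W, Matrix.updateRow_ne hk, vandermonde_apply, if_neg hk, one_mul, norm_pow]
      exact (pow_le_pow_left₀ (norm_nonneg _) (hzM k) _).trans (hpow k t)
  calc ‖(vandermonde z).det‖ = ‖W.det‖ := by rw [Matrix.det_updateRow_add_smul_self _ hij.symm]
    _ ≤ √n ^ n * ∏ k, (if k = j then n * ‖z j - z i‖ else 1) * M k ^ (n - 1) :=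
      W.norm_det_le_sqrt_card_pow_mul_prod _ hW
    _ = √n ^ (n + 2) * ‖z j - z i‖ * ∏ k, M k ^ (n - 1) := by
      rw [prod_mul_distrib, prod_ite_eq' univ j, if_pos (mem_univ j), pow_add,
        Real.sq_sqrt (Nat.cast_nonneg n)]
      ring

theorem Matrix.norm_det_vandermonde_le {n : ℕ} (z : Fin n → ℂ) {i j : Fin n} (hij : i ≠ j) :
    ‖(vandermonde z).det‖ ≤ √n ^ (n + 2) * ‖z i - z j‖ * ∏ k, max 1 ‖z k‖ ^ (n - 1) := by
  rcases le_total ‖z i‖ ‖z j‖ with h | h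
  · rw [norm_sub_rev]
    exact norm_det_vandermonde_le_of_norm_le z hij h
  · exact norm_det_vandermonde_le_of_norm_le z hij.symm h

theorem Matrix.det_vandermonde_eq_prod_filter_lt {R : Type*} [CommRing R] {n : ℕ}
    (z : Fin n → R) :
    (Matrix.vandermonde z).det = ∏ q ∈ univ.filter (fun q : Fin n × Fin n => q.1 < q.2),
      (z q.2 - z q.1) := by
  rw [Matrix.det_vandermonde, prod_filter, ← univ_product_univ, prod_product]
  refine prod_congr rfl fun i _ => ?_
  rw [← prod_filter]
  congr 1
  ext j
  simp

theorem sqrt_norm_pow_mul_prod_sq_sub_eq {n : ℕ} (c : ℂ) (z : Fin n → ℂ) :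
    √‖c ^ (2 * n - 2) * ∏ q ∈ univ.filter (fun q : Fin n × Fin n => q.1 < q.2),
      (z q.2 - z q.1) ^ 2‖ = ‖c‖ ^ (n - 1) * ‖(Matrix.vandermonde z).det‖ := by
  rw [prod_pow, ← Matrix.det_vandermonde_eq_prod_filter_lt,
    show 2 * n - 2 = (n - 1) * 2 by omega, pow_mul, ← mul_pow, norm_pow,
    Real.sqrt_sq (norm_nonneg _), norm_mul, norm_pow]

theorem Polynomial.mahlerMeasure_C_mul_prod_X_sub_C {ι : Type*} [Fintype ι] (c : ℂ)
    (z : ι → ℂ) :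
    (C c * ∏ i, (X - C (z i))).mahlerMeasure = ‖c‖ * ∏ i, max 1 ‖z i‖ := by
  rw [mahlerMeasure_mul, mahlerMeasure_const, prod_eq_multiset_prod,
    prod_mahlerMeasure_eq_mahlerMeasure_prod, Multiset.map_map, prod_eq_multiset_prod]
  simp only [Function.comp_def, mahlerMeasure_X_sub_C]

theorem abs_leadingCoeff_mul_prod_le_sqrt_sum_sq_coeff {ι : Type*} [Fintype ι] (p : ℝ[X])
    (z : ι → ℂ)
    (hfact : p.map (algebraMap ℝ ℂ) = C (p.leadingCoeff : ℂ) * ∏ i, (X - C (z i))) :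
    |p.leadingCoeff| * ∏ i, max 1 ‖z i‖ ≤ √(∑ k ∈ range (p.natDegree + 1), p.coeff k ^ 2) := by
  have hM := (p.map (algebraMap ℝ ℂ)).mahlerMeasure_le_sqrt_sum_sq_norm_coeff
  rw [hfact, mahlerMeasure_C_mul_prod_X_sub_C, Complex.norm_real, Real.norm_eq_abs, ← hfact,
    ← Polynomial.sum_def (f := fun _ a => ‖a‖ ^ 2), sum_over_range _ (by simp)] at hM
  simpa [natDegree_map] using hM

theorem stmt1_general (n : ℕ) (p : Polynomial ℝ) (hdeg : p.natDegree = n)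
    (z : Fin n → ℂ)
    (hfact : p.map (algebraMap ℝ ℂ) =
      Polynomial.C ((p.leadingCoeff : ℝ) : ℂ) * ∏ i, (Polynomial.X - Polynomial.C (z i))) :
    ∀ i j : Fin n, i ≠ j →
      Real.sqrt (‖((p.leadingCoeff : ℝ) : ℂ)^(2*n-2) *
          ∏ q ∈ Finset.univ.filter (fun q : Fin n × Fin n => q.1 < q.2), (z q.2 - z q.1)^2‖) *
        (Real.sqrt (∑ i ∈ Finset.range (n+1), (p.coeff i)^2)) ^ (-((n:ℝ) - 1)) *
        (n:ℝ) ^ (-((n:ℝ) + 2)/2) ≤ ‖z i - z j‖ := by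
  intro i j hij
  set L := √(∑ k ∈ range (n + 1), p.coeff k ^ 2)
  set M := ∏ k, max 1 ‖z k‖
  have hn : 1 ≤ n := i.pos
  have hlc : 0 < |p.leadingCoeff| :=
    abs_pos.2 (leadingCoeff_ne_zero.2 (by rintro rfl; simp at hdeg; omega))
  have hLandau : |p.leadingCoeff| * M ≤ L := by
    simpa [hdeg] using abs_leadingCoeff_mul_prod_le_sqrt_sum_sq_coeff p z hfact
  have hL : 0 < L :=
    (mul_pos hlc (zero_lt_one.trans_le (one_le_prod fun k _ => le_max_left _ _))).trans_le hLandau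
  have hLpow : L ^ (-((n : ℝ) - 1)) = (L ^ (n - 1))⁻¹ := by
    rw [show -((n : ℝ) - 1) = -((n - 1 : ℕ) : ℝ) by push_cast [hn]; ring, Real.rpow_neg hL.le,
      Real.rpow_natCast]
  have hnpow : (n : ℝ) ^ (-((n : ℝ) + 2) / 2) = (√n ^ (n + 2))⁻¹ := by
    rw [neg_div, Real.rpow_neg (Nat.cast_nonneg n), Real.rpow_div_two_eq_sqrt _ (Nat.cast_nonneg n),
      show (n : ℝ) + 2 = ((n + 2 : ℕ) : ℝ) by simp, Real.rpow_natCast]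
  rw [sqrt_norm_pow_mul_prod_sq_sub_eq, Complex.norm_real, Real.norm_eq_abs, hLpow, hnpow,
    ← div_eq_mul_inv, ← div_eq_mul_inv, div_div, div_le_iff₀ (by positivity)]
  calc |p.leadingCoeff| ^ (n - 1) * ‖(Matrix.vandermonde z).det‖
      ≤ |p.leadingCoeff| ^ (n - 1) * (√n ^ (n + 2) * ‖z i - z j‖ * M ^ (n - 1)) := by
        rw [← prod_pow]
        gcongr
        exact Matrix.norm_det_vandermonde_le z hij
    _ = ‖z i - z j‖ * ((|p.leadingCoeff| * M) ^ (n - 1) * √n ^ (n + 2)) := by ring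
    _ ≤ ‖z i - z j‖ * (L ^ (n - 1) * √n ^ (n + 2)) := by gcongr

/-- root separation lower bound
    σ_p ≥ √|Disc(p)| · ‖p‖₂^{-(n-1)} · n^{-(n+2)/2}. -/
theorem stmt1 (n : ℕ) (hn : 2 ≤ n) (p : Polynomial ℝ) (hdeg : p.natDegree = n)
    (hsq : Squarefree p) (z : Fin n → ℂ) (hinj : Function.Injective z)
    (hfact : p.map (algebraMap ℝ ℂ) =
      Polynomial.C ((p.leadingCoeff : ℝ) : ℂ) * ∏ i, (Polynomial.X - Polynomial.C (z i))) :
    ∀ i j : Fin n, i ≠ j →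
      Real.sqrt (‖((p.leadingCoeff : ℝ) : ℂ)^(2*n-2) *
          ∏ q ∈ Finset.univ.filter (fun q : Fin n × Fin n => q.1 < q.2), (z q.2 - z q.1)^2‖) *
        (Real.sqrt (∑ i ∈ Finset.range (n+1), (p.coeff i)^2)) ^ (-((n:ℝ) - 1)) *
        (n:ℝ) ^ (-((n:ℝ) + 2)/2) ≤ ‖z i - z j‖ :=
  stmt1_general n p hdeg z hfact
end

section
/- For a real polynomial p of degree n with roots z_1,...,z_n and leading coefficient p_n, the discriminant satisfies |Disc(p)| ≤ n^n · Mea(p)^{2n-2}, where Mea(p) is the Mahler measure. -/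
/-!
Up to the factor `|p_n|^(2n-2)`, the discriminant is the squared modulus of the Vandermonde
determinant of the roots. By Hadamard's inequality this is at most the product over the rows of
`∑_{j<n} |z_i|^(2j) ≤ n · max(1, |z_i|)^(2n-2)`. Hadamard's inequality in turn follows by
normalising the rows of `W`: the Gram matrix `W Wᴴ` is then positive semidefinite of trace `n`,
so AM-GM on its eigenvalues bounds `|det W|² = det (W Wᴴ)` by `1`.
-/

open Finset

theorem Real.prod_le_one_of_sum_eq_card {ι : Type*} (s : Finset ι) {f : ι → ℝ}
    (hf : ∀ i ∈ s, 0 ≤ f i) (hsum : ∑ i ∈ s, f i = #s) : ∏ i ∈ s, f i ≤ 1 :=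
  calc ∏ i ∈ s, f i ≤ ∏ i ∈ s, Real.exp (f i - 1) :=
        prod_le_prod hf fun i _ => by linarith [Real.add_one_le_exp (f i - 1)]
    _ = 1 := by rw [← Real.exp_sum, sum_sub_distrib, hsum]; simp

theorem sum_norm_pow_sq_le {R : Type*} [NormedDivisionRing R] (x : R) (n : ℕ) :
    ∑ j : Fin n, ‖x ^ (j : ℕ)‖ ^ 2 ≤ n * max 1 ‖x‖ ^ (2 * n - 2) :=
  calc ∑ j : Fin n, ‖x ^ (j : ℕ)‖ ^ 2 ≤ ∑ _j : Fin n, max 1 ‖x‖ ^ (2 * n - 2) :=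
        sum_le_sum fun j _ => by
          rw [norm_pow, ← pow_mul]
          exact (pow_le_pow_left₀ (norm_nonneg x) (le_max_right 1 _) _).trans
            (pow_le_pow_right₀ (le_max_left _ _) (by omega))
    _ = n * max 1 ‖x‖ ^ (2 * n - 2) := by simp

open scoped ComplexOrder

namespace Matrix

variable {𝕜 ι : Type*} [RCLike 𝕜] [Fintype ι] [DecidableEq ι]

theorem norm_det_sq_le_one_of_sum_norm_sq_eq_one (W : Matrix ι ι 𝕜)
    (hrow : ∀ i, ∑ j, ‖W i j‖ ^ 2 = 1) : ‖W.det‖ ^ 2 ≤ 1 := by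
  have hG := posSemidef_self_mul_conjTranspose W
  have htrace : (W * Wᴴ).trace = Fintype.card ι := by
    simp only [trace, diag_apply, mul_apply, conjTranspose_apply, RCLike.star_def,
      RCLike.mul_conj]
    norm_cast
    simp [hrow]
  have hsum : ∑ i, hG.isHermitian.eigenvalues i = Fintype.card ι := by
    exact_mod_cast hG.isHermitian.trace_eq_sum_eigenvalues.symm.trans htrace
  have hdet : ‖W.det‖ ^ 2 = ∏ i, hG.isHermitian.eigenvalues i := by
    have h := hG.isHermitian.det_eq_prod_eigenvalues
    rw [det_mul, det_conjTranspose, RCLike.star_def, RCLike.mul_conj] at h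
    exact_mod_cast h
  rw [hdet]
  exact Real.prod_le_one_of_sum_eq_card univ (fun i _ => hG.eigenvalues_nonneg i) hsum

theorem norm_det_sq_le_prod_sum_norm_sq (W : Matrix ι ι 𝕜) :
    ‖W.det‖ ^ 2 ≤ ∏ i, ∑ j, ‖W i j‖ ^ 2 := by
  set s : ι → ℝ := fun i => ∑ j, ‖W i j‖ ^ 2
  by_cases hzero : ∃ i, s i = 0
  · obtain ⟨i, hi⟩ := hzero
    have hrow : ∀ j, W i j = 0 := fun j => by
      simpa using (sum_eq_zero_iff_of_nonneg fun j _ => by positivity).mp hi j (mem_univ j)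
    rw [det_eq_zero_of_row_eq_zero i hrow, norm_zero, zero_pow two_ne_zero]
    positivity
  push Not at hzero
  have hs : ∀ i, 0 < s i := fun i => lt_of_le_of_ne (by positivity) (hzero i).symm
  set V : Matrix ι ι 𝕜 := diagonal (fun i => (((√(s i))⁻¹ : ℝ) : 𝕜)) * W
  have hV : ∀ i, ∑ j, ‖V i j‖ ^ 2 = 1 := fun i => by
    simp only [V, diagonal_mul, norm_mul, mul_pow, ← mul_sum, RCLike.norm_ofReal, abs_inv,
      sq_abs, inv_pow, Real.sq_sqrt (hs i).le]
    exact inv_mul_cancel₀ (hs i).ne'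
  have hdet := norm_det_sq_le_one_of_sum_norm_sq_eq_one V hV
  rw [det_mul, det_diagonal, norm_mul, mul_pow, norm_prod, ← prod_pow] at hdet
  simp only [RCLike.norm_ofReal, abs_inv, inv_pow, sq_abs, Real.sq_sqrt (hs _).le,
    prod_inv_distrib] at hdet
  rwa [inv_mul_le_iff₀ (prod_pos fun i _ => hs i), mul_one] at hdet

theorem prod_filter_lt_sub_sq_eq_det_vandermonde_sq {R : Type*} [CommRing R] {n : ℕ}
    (z : Fin n → R) :
    ∏ q ∈ univ.filter (fun q : Fin n × Fin n => q.1 < q.2), (z q.2 - z q.1) ^ 2 =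
      (vandermonde z).det ^ 2 := by
  rw [det_vandermonde, prod_finset_product' _ univ Ioi (by simp)
    (f := fun i j => (z j - z i) ^ 2)]
  simp only [prod_pow]

theorem norm_det_vandermonde_sq_le {n : ℕ} (z : Fin n → 𝕜) :
    ‖(vandermonde z).det‖ ^ 2 ≤ n ^ n * (∏ i, max 1 ‖z i‖) ^ (2 * n - 2) :=
  calc ‖(vandermonde z).det‖ ^ 2 ≤ ∏ i, ∑ j, ‖vandermonde z i j‖ ^ 2 :=
        norm_det_sq_le_prod_sum_norm_sq _
    _ ≤ ∏ i, (n * max 1 ‖z i‖ ^ (2 * n - 2)) :=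
        prod_le_prod (fun i _ => by positivity) fun i _ => sum_norm_pow_sq_le (z i) n
    _ = n ^ n * (∏ i, max 1 ‖z i‖) ^ (2 * n - 2) := by simp [prod_mul_distrib, prod_pow]

end Matrix

theorem stmt2_general (n : ℕ) (p : Polynomial ℝ)
    (z : Fin n → ℂ) :
    ‖((p.leadingCoeff : ℝ) : ℂ)^(2*n-2) *
        ∏ q ∈ Finset.univ.filter (fun q : Fin n × Fin n => q.1 < q.2), (z q.2 - z q.1)^2‖ ≤
      (n:ℝ)^n * (|p.leadingCoeff| * ∏ i, max 1 ‖z i‖)^(2*n-2) := by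
  rw [Matrix.prod_filter_lt_sub_sq_eq_det_vandermonde_sq, norm_mul, norm_pow, norm_pow,
    Complex.norm_real, Real.norm_eq_abs, mul_pow, mul_left_comm]
  gcongr
  exact Matrix.norm_det_vandermonde_sq_le z

/-- |Disc(p)| ≤ n^n · Mea(p)^{2n-2}. -/
theorem stmt2 (n : ℕ) (p : Polynomial ℝ) (hdeg : p.natDegree = n)
    (z : Fin n → ℂ)
    (hfact : p.map (algebraMap ℝ ℂ) =
      Polynomial.C ((p.leadingCoeff : ℝ) : ℂ) * ∏ i, (Polynomial.X - Polynomial.C (z i))) :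
    ‖((p.leadingCoeff : ℝ) : ℂ)^(2*n-2) *
        ∏ q ∈ Finset.univ.filter (fun q : Fin n × Fin n => q.1 < q.2), (z q.2 - z q.1)^2‖ ≤
      (n:ℝ)^n * (|p.leadingCoeff| * ∏ i, max 1 ‖z i‖)^(2*n-2) :=
  stmt2_general n p z
end

section
/- Let p be a square-free real polynomial of degree n with roots z_1,...,z_n and leading coefficient |p_n| ≥ 1/4, and let z_k be the root closest to z_i (k ≠ i). Then the separation σ(z_i,p) = |z_i - z_k| satisfies σ(z_i,p) ≥ |p'(z_i)| / (|p_n|·∏_{j≠k,i}|z_j - z_i|) ≥ |p'(z_i)| / (2^{τ_p}·2^{n+1}·max(1,|z_i|)^n). -/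
/-!
Since `p'(z_i) = p_n ∏_{j ≠ i} (z_i - z_j)`, the middle quotient is exactly `|z_i - z_k|`.
For the outer bound, `|p_n| ∏_{j ≠ i,k} |z_j - z_i|` is at most the Mahler measure of
`q(x) = p(x + z_i)`, whose roots are the `z_j - z_i`. The Mahler measure is at most the sum of
the norms of the coefficients of `q`, and expanding each `(x + z_i)^l` binomially bounds that
sum by `∑_l |p_l| (1 + |z_i|)^l ≤ 2^τ 2^(n+1) max(1, |z_i|)^n`.
-/

open Polynomial Finset

namespace Polynomial

theorem eval_derivative_C_mul_prod_X_sub_C {R ι : Type*} [CommRing R] [DecidableEq ι]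
    (c : R) {s : Finset ι} (w : ι → R) {i : ι} (hi : i ∈ s) :
    (derivative (C c * ∏ j ∈ s, (X - C (w j)))).eval (w i) =
      c * ∏ j ∈ s.erase i, (w i - w j) := by
  rw [derivative_C_mul, derivative_prod_finset, eval_mul, eval_C, eval_finsetSum,
    sum_eq_single_of_mem i hi]
  · simp [eval_prod]
  · intro j _ hji
    simp only [derivative_X_sub_C, mul_one, eval_prod, eval_sub, eval_X, eval_C]
    exact prod_eq_zero (mem_erase.mpr ⟨Ne.symm hji, hi⟩) (sub_self _)

theorem C_mul_prod_X_sub_C_comp_X_add_C {R ι : Type*} [CommRing R] (c : R) (s : Finset ι)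
    (w : ι → R) (a : R) :
    (C c * ∏ j ∈ s, (X - C (w j))).comp (X + C a) = C c * ∏ j ∈ s, (X - C (w j - a)) := by
  simp only [mul_comp, C_comp, prod_comp, sub_comp, X_comp, map_sub]
  congr 1
  exact prod_congr rfl fun _ _ => by ring

theorem mahlerMeasure_C_mul_prod_X_sub_C_s7 {ι : Type*} (c : ℂ) (s : Finset ι) (w : ι → ℂ) :
    (C c * ∏ j ∈ s, (X - C (w j))).mahlerMeasure = ‖c‖ * ∏ j ∈ s, max 1 ‖w j‖ := by
  rw [mahlerMeasure_mul, mahlerMeasure_const, prod_eq_multiset_prod,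
    prod_mahlerMeasure_eq_mahlerMeasure_prod, Multiset.map_map]
  simp only [Function.comp_def, mahlerMeasure_X_sub_C]
  rfl

theorem mahlerMeasure_le_sum_range_norm_coeff (p : ℂ[X]) {N : ℕ} (hN : p.natDegree < N) :
    p.mahlerMeasure ≤ ∑ m ∈ range N, ‖p.coeff m‖ :=
  (mahlerMeasure_le_sum_norm_coeff p).trans_eq (sum_over_range' p (by simp) N hN)

theorem sum_norm_coeff_comp_X_add_C_le {R : Type*} [NormedCommRing R] [NormOneClass R]
    (p : R[X]) (a : R) {N : ℕ} (hN : p.natDegree < N) :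
    ∑ m ∈ range N, ‖(p.comp (X + C a)).coeff m‖ ≤
      ∑ l ∈ range N, ‖p.coeff l‖ * (1 + ‖a‖) ^ l := by
  have hbinom : ∀ l ∈ range N,
      ∑ m ∈ range N, ‖a‖ ^ (l - m) * (l.choose m : ℝ) = (1 + ‖a‖) ^ l := by
    intro l hl
    rw [add_pow, ← sum_subset (range_subset_range.mpr (mem_range.mp hl))]
    · simp
    · intro m _ hm
      simp [Nat.choose_eq_zero_of_lt (by simpa using hm)]
  calc ∑ m ∈ range N, ‖(p.comp (X + C a)).coeff m‖
      ≤ ∑ m ∈ range N, ∑ l ∈ range N,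
          ‖p.coeff l‖ * (‖a‖ ^ (l - m) * (l.choose m : ℝ)) := by
        gcongr with m
        rw [comp_eq_sum_left, sum_over_range' p (by simp) N hN, finsetSum_coeff]
        refine (norm_sum_le _ _).trans (sum_le_sum fun l _ => ?_)
        rw [coeff_C_mul, coeff_X_add_C_pow]
        refine (norm_mul_le _ _).trans (mul_le_mul_of_nonneg_left ?_ (norm_nonneg _))
        refine (norm_mul_le _ _).trans ?_
        gcongr
        · exact norm_pow_le _ _
        · exact (Nat.norm_cast_le _).trans_eq (by simp)
    _ = ∑ l ∈ range N, ‖p.coeff l‖ * (1 + ‖a‖) ^ l := by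
        rw [sum_comm]
        exact sum_congr rfl fun l hl => by rw [← mul_sum, hbinom l hl]

theorem norm_mul_prod_norm_sub_le_sum_norm_coeff {ι : Type*} {P : ℂ[X]} {c : ℂ}
    {s t : Finset ι} {w : ι → ℂ} (hP : P = C c * ∏ j ∈ s, (X - C (w j))) (hts : t ⊆ s)
    (a : ℂ) {N : ℕ} (hN : P.natDegree < N) :
    ‖c‖ * ∏ j ∈ t, ‖w j - a‖ ≤ ∑ l ∈ range N, ‖P.coeff l‖ * (1 + ‖a‖) ^ l := by
  have hcomp : (P.comp (X + C a)).natDegree < N :=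
    natDegree_comp_le.trans_lt (by simpa using hN)
  calc ‖c‖ * ∏ j ∈ t, ‖w j - a‖
      ≤ ‖c‖ * ∏ j ∈ s, max 1 ‖w j - a‖ := by
        gcongr
        exact (prod_le_prod (fun _ _ => norm_nonneg _) fun _ _ => le_max_right _ _).trans
          (prod_le_prod_of_subset_of_one_le hts (fun _ _ => by positivity)
            fun _ _ _ => le_max_left _ _)
    _ = (P.comp (X + C a)).mahlerMeasure := by
        rw [hP, C_mul_prod_X_sub_C_comp_X_add_C, mahlerMeasure_C_mul_prod_X_sub_C_s7]
    _ ≤ ∑ m ∈ range N, ‖(P.comp (X + C a)).coeff m‖ :=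
        mahlerMeasure_le_sum_range_norm_coeff _ hcomp
    _ ≤ ∑ l ∈ range N, ‖P.coeff l‖ * (1 + ‖a‖) ^ l :=
        sum_norm_coeff_comp_X_add_C_le P a hN

end Polynomial

theorem sum_mul_one_add_pow_le {x : ℕ → ℝ} {H t : ℝ} (n : ℕ) (hx : ∀ l ≤ n, x l ≤ H)
    (hH : 0 ≤ H) (ht : 0 ≤ t) :
    ∑ l ∈ range (n + 1), x l * (1 + t) ^ l ≤ H * 2 ^ (n + 1) * max 1 t ^ n := by
  have hpow : ∀ l ≤ n, (1 + t) ^ l ≤ 2 ^ l * max 1 t ^ n := fun l hl =>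
    calc (1 + t) ^ l ≤ (2 * max 1 t) ^ l := by
          gcongr; linarith [le_max_left 1 t, le_max_right 1 t]
      _ ≤ 2 ^ l * max 1 t ^ n := by
          rw [mul_pow]; gcongr
          exact le_max_left 1 t
  calc ∑ l ∈ range (n + 1), x l * (1 + t) ^ l
      ≤ ∑ l ∈ range (n + 1), H * (2 ^ l * max 1 t ^ n) := by
        refine sum_le_sum fun l hl => ?_
        have hln : l ≤ n := Nat.lt_succ_iff.mp (mem_range.mp hl)
        exact mul_le_mul (hx l hln) (hpow l hln) (by positivity) hH
    _ = H * (2 ^ (n + 1) - 1) * max 1 t ^ n := by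
        rw [← mul_sum, ← sum_mul, geom_sum_eq (by norm_num : (2:ℝ) ≠ 1)]; ring
    _ ≤ H * 2 ^ (n + 1) * max 1 t ^ n := by gcongr; linarith

theorem le_two_rpow_max_one_logb (x : ℝ) : x ≤ 2 ^ max 1 (Real.logb 2 x) := by
  rcases le_or_gt x 0 with hx | hx
  · exact hx.trans (by positivity)
  · calc x = 2 ^ Real.logb 2 x := (Real.rpow_logb (by norm_num) (by norm_num) hx).symm
      _ ≤ 2 ^ max 1 (Real.logb 2 x) :=
        Real.rpow_le_rpow_of_exponent_le (by norm_num) (le_max_right _ _)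

/-- σ(z_i,p) ≥ |p'(z_i)|/(|p_n|·∏_{j≠k,i}|z_j-z_i|)
    ≥ |p'(z_i)|/(2^{τ_p}·2^{n+1}·max(1,|z_i|)^n), where z_k is the root closest to z_i. -/
theorem stmt7 (n : ℕ) (p : Polynomial ℝ) (hdeg : p.natDegree = n)
    (z : Fin n → ℂ)
    (hfact : p.map (algebraMap ℝ ℂ) =
      Polynomial.C ((p.leadingCoeff : ℝ) : ℂ) * ∏ i, (Polynomial.X - Polynomial.C (z i)))
    (i k : Fin n) (hki : k ≠ i)
    (τ : ℝ) (hτ : τ = max 1 (Real.logb 2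
      ((Finset.range (n+1)).sup' (by simp) (fun j => |p.coeff j|)))) :
    ‖(Polynomial.aeval (z i)) (Polynomial.derivative p)‖ /
        ((2:ℝ)^τ * 2^(n+1) * max 1 (‖z i‖)^n) ≤
      ‖(Polynomial.aeval (z i)) (Polynomial.derivative p)‖ /
        (|p.leadingCoeff| * ∏ j ∈ (Finset.univ.erase i).erase k, ‖z j - z i‖) ∧
    ‖(Polynomial.aeval (z i)) (Polynomial.derivative p)‖ /
        (|p.leadingCoeff| * ∏ j ∈ (Finset.univ.erase i).erase k, ‖z j - z i‖) ≤
      ‖z i - z k‖ := by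
  set D := |p.leadingCoeff| * ∏ j ∈ (univ.erase i).erase k, ‖z j - z i‖
  have hderiv : ‖aeval (z i) (derivative p)‖ = D * ‖z i - z k‖ := by
    rw [aeval_def, eval₂_eq_eval_map, ← derivative_map, hfact,
      eval_derivative_C_mul_prod_X_sub_C _ _ (mem_univ i), norm_mul, norm_prod,
      ← mul_prod_erase _ _ (mem_erase.mpr ⟨hki, mem_univ k⟩)]
    simp only [D, Complex.norm_real, Real.norm_eq_abs, norm_sub_rev (z i)]
    ring
  have hbound : D ≤ 2 ^ τ * 2 ^ (n + 1) * max 1 ‖z i‖ ^ n := by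
    set H := (range (n + 1)).sup' (by simp) fun j => |p.coeff j|
    have hH : ∀ l ≤ n, |p.coeff l| ≤ H := fun l hl =>
      le_sup' (fun j => |p.coeff j|) (mem_range.mpr (by omega))
    calc D = ‖((p.leadingCoeff : ℝ) : ℂ)‖ * ∏ j ∈ (univ.erase i).erase k, ‖z j - z i‖ := by
          simp [D, Complex.norm_real]
      _ ≤ ∑ l ∈ range (n + 1), ‖(p.map (algebraMap ℝ ℂ)).coeff l‖ * (1 + ‖z i‖) ^ l :=
          norm_mul_prod_norm_sub_le_sum_norm_coeff hfact (subset_univ _) (z i)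
            (by simp [hdeg])
      _ ≤ H * 2 ^ (n + 1) * max 1 ‖z i‖ ^ n :=
          sum_mul_one_add_pow_le n (fun l hl => by simpa using hH l hl)
            ((abs_nonneg _).trans (hH n le_rfl)) (norm_nonneg _)
      _ ≤ 2 ^ τ * 2 ^ (n + 1) * max 1 ‖z i‖ ^ n := by
          gcongr; rw [hτ]; exact le_two_rpow_max_one_logb H
  rw [hderiv]
  rcases (show 0 ≤ D by positivity).eq_or_lt with h0 | hpos
  · simp [← h0]
  · exact ⟨div_le_div_of_nonneg_left (by positivity) hpos hbound,
      (mul_div_cancel_left₀ _ hpos.ne').le⟩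
end

section
/- Correspondence between Möbius-transform coefficients and Bernstein coefficients: Let I = (a,b), let P(x) = Σ_{i=0}^n b_i B_i^n[a,b](x) be the Bernstein representation of P of degree n with respect to I, where B_i^n[a,b](x) = C(n,i)·(x-a)^i(b-x)^{n-i}/(b-a)^n, and let P_I(x) = Σ p_{I,i} x^i = (x+1)^n P((ax+b)/(x+1)). Then p_{I,i} = b_{n-i}·C(n,i) for all i = 0,...,n. In particular, var(P,I) equals the number of sign variations in (b_0,...,b_n). -/
open Polynomial Finset

open Classical in
/-- Number of sign variations in the coefficient sequence (f 0, ..., f N). -/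
noncomputable def signVar (f : ℕ → ℝ) (N : ℕ) : ℕ :=
  ((Finset.range (N+1) ×ˢ Finset.range (N+1)).filter
    (fun q => q.1 < q.2 ∧ f q.1 * f q.2 < 0 ∧ ∀ l ∈ Finset.Ioo q.1 q.2, f l = 0)).card

/-- The Möbius-transformed polynomial P_I(x) = (x+1)^n · P((ax+b)/(x+1)). -/
noncomputable def mobius (P : Polynomial ℝ) (n : ℕ) (a b : ℝ) : Polynomial ℝ :=
  ∑ i ∈ Finset.range (n+1),
    Polynomial.C (P.coeff i) * (Polynomial.C a * Polynomial.X + Polynomial.C b)^i *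
      (Polynomial.X + 1)^(n-i)

/-- var(P,(a,b)) = number of sign variations in the coefficient sequence of P_I. -/
noncomputable def var (P : Polynomial ℝ) (n : ℕ) (a b : ℝ) : ℕ :=
  signVar (fun i => (mobius P n a b).coeff i) n

/-- The Bernstein basis polynomial B_i^n[a,b](x) = C(n,i)(x-a)^i(b-x)^{n-i}/(b-a)^n. -/
noncomputable def bern (n i : ℕ) (a b : ℝ) : Polynomial ℝ :=
  Polynomial.C ((n.choose i : ℝ) / (b-a)^n) * (Polynomial.X - Polynomial.C a)^i *
    (Polynomial.C b - Polynomial.X)^(n-i)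

/-!
Substituting `(ax+b)/(x+1)` for the variable and multiplying by `(x+1)^n` turns `x - a` into
`(b-a)/(x+1)` and `b - x` into `(b-a)x/(x+1)`, so it sends the Bernstein polynomial `B_i^n[a,b]`
to `C(n,i) x^(n-i)`. Reading off coefficients gives `p_{I,i} = C(n,i) b_{n-i}`; as the binomial
weights are positive and reversing a sequence preserves its sign variations,
`var(P,I) = var(b_0,…,b_n)`.
-/

section SignVar

variable {N : ℕ}

lemma signVar_congr_of_pos {f g c : ℕ → ℝ} (hc : ∀ i ≤ N, 0 < c i)
    (hfg : ∀ i ≤ N, f i = c i * g i) : signVar f N = signVar g N := by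
  unfold signVar
  congr 1
  refine Finset.filter_congr fun q hq => ?_
  simp only [Finset.mem_product, Finset.mem_range] at hq
  have hq₁ : q.1 ≤ N := by omega
  have hq₂ : q.2 ≤ N := by omega
  have hsign : f q.1 * f q.2 < 0 ↔ g q.1 * g q.2 < 0 := by
    rw [hfg _ hq₁, hfg _ hq₂, mul_mul_mul_comm]
    have := mul_pos (hc _ hq₁) (hc _ hq₂)
    constructor <;> intro h <;> nlinarith
  have hzero : ∀ l ∈ Finset.Ioo q.1 q.2, f l = 0 ↔ g l = 0 := fun l hl => by
    have hl : l ≤ N := by grind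
    rw [hfg l hl, mul_eq_zero, or_iff_right (hc l hl).ne']
  rw [hsign]
  exact and_congr_right fun _ => and_congr_right fun _ => forall₂_congr hzero

lemma signVar_le_signVar_reverse (g : ℕ → ℝ) :
    signVar g N ≤ signVar (fun i => g (N - i)) N := by
  unfold signVar
  refine Finset.card_le_card_of_injOn (fun q => (N - q.2, N - q.1)) (fun q hq => ?_) ?_
  · simp only [Finset.coe_filter, Finset.mem_product, Finset.mem_range, Set.mem_ofPred_eq,
      Finset.mem_Ioo] at hq ⊢
    obtain ⟨⟨h₁, h₂⟩, hlt, hneg, hzero⟩ := hq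
    refine ⟨⟨by omega, by omega⟩, by omega, ?_, fun l hl => hzero (N - l) (by omega)⟩
    rwa [Nat.sub_sub_self (by omega), Nat.sub_sub_self (by omega), mul_comm]
  · rintro ⟨p₁, p₂⟩ hp ⟨q₁, q₂⟩ hq h
    simp only [Finset.coe_filter, Finset.mem_product, Finset.mem_range, Set.mem_ofPred_eq,
      Prod.mk.injEq] at hp hq h ⊢
    omega

lemma signVar_reverse (g : ℕ → ℝ) : signVar (fun i => g (N - i)) N = signVar g N := by
  refine le_antisymm ?_ (signVar_le_signVar_reverse g)
  calc signVar (fun i => g (N - i)) N ≤ signVar (fun i => g (N - (N - i))) N :=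
        signVar_le_signVar_reverse _
    _ = signVar g N :=
        signVar_congr_of_pos (c := 1) (fun _ _ => one_pos)
          (fun i hi => by rw [Nat.sub_sub_self hi, Pi.one_apply, one_mul])

end SignVar

section Mobius

variable {n : ℕ} {a b x : ℝ}

lemma natDegree_bern_le {i : ℕ} (hi : i ≤ n) : (bern n i a b).natDegree ≤ n := by
  unfold bern
  compute_degree
  omega

lemma eval_mobius {P : ℝ[X]} (hP : P.natDegree ≤ n) (hx : x + 1 ≠ 0) :
    (mobius P n a b).eval x = (x + 1) ^ n * P.eval ((a * x + b) / (x + 1)) := by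
  rw [P.eval_eq_sum_range' (Nat.lt_succ_of_le hP), Finset.mul_sum]
  simp only [mobius, eval_finsetSum, eval_mul, eval_pow, eval_add, eval_C, eval_X, eval_one]
  refine Finset.sum_congr rfl fun i hi => ?_
  rw [← pow_mul_pow_sub (x + 1) (Finset.mem_range_succ_iff.1 hi), div_pow]
  field_simp

lemma mobius_eval_bern {i : ℕ} (hi : i ≤ n) (hab : a ≠ b) (hx : x + 1 ≠ 0) :
    (x + 1) ^ n * (bern n i a b).eval ((a * x + b) / (x + 1)) = n.choose i * x ^ (n - i) := by
  have hba : b - a ≠ 0 := sub_ne_zero.2 hab.symm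
  have hlow : (a * x + b) / (x + 1) - a = (b - a) / (x + 1) := by field_simp; ring
  have hupp : b - (a * x + b) / (x + 1) = (b - a) * x / (x + 1) := by field_simp; ring
  simp only [bern, eval_mul, eval_C, eval_pow, eval_sub, eval_X, hlow, hupp]
  rw [← pow_mul_pow_sub (x + 1) hi, ← pow_mul_pow_sub (b - a) hi, div_pow, div_pow, mul_pow]
  field_simp

lemma mobius_sum_bern (β : ℕ → ℝ) (hab : a ≠ b) :
    mobius (∑ i ∈ Finset.range (n + 1), C (β i) * bern n i a b) n a b =
      ∑ i ∈ Finset.range (n + 1), C (β i * n.choose i) * X ^ (n - i) := by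
  have hdeg : (∑ i ∈ Finset.range (n + 1), C (β i) * bern n i a b).natDegree ≤ n :=
    natDegree_sum_le_of_forall_le _ _ fun i hi =>
      (natDegree_C_mul_le _ _).trans (natDegree_bern_le (Finset.mem_range_succ_iff.1 hi))
  refine eq_of_infinite_eval_eq _ _ ((Set.finite_singleton (-1 : ℝ)).infinite_compl.mono ?_)
  intro x hx
  have hx : x + 1 ≠ 0 := fun h => hx (eq_neg_of_add_eq_zero_left h)
  simp only [Set.mem_ofPred_eq, eval_mobius hdeg hx, eval_finsetSum, Finset.mul_sum]
  refine Finset.sum_congr rfl fun i hi => ?_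
  rw [eval_mul, eval_C, mul_left_comm, mobius_eval_bern (Finset.mem_range_succ_iff.1 hi) hab hx]
  simp only [eval_mul, eval_C, eval_pow, eval_X]
  ring

lemma coeff_sum_C_mul_X_pow_sub {γ : ℕ → ℝ} {j : ℕ} (hj : j ≤ n) :
    (∑ i ∈ Finset.range (n + 1), C (γ i) * X ^ (n - i)).coeff j = γ (n - j) := by
  rw [finsetSum_coeff, Finset.sum_eq_single (n - j)]
  · rw [coeff_C_mul_X_pow, Nat.sub_sub_self hj, if_pos rfl]
  · intro i hi hne
    rw [coeff_C_mul_X_pow, if_neg (by grind)]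
  · intro h
    exact absurd (Finset.mem_range_succ_iff.2 (Nat.sub_le n j)) h

end Mobius

theorem stmt10_general (P : Polynomial ℝ) (n : ℕ)
    (a b : ℝ) (hab : a < b) (β : ℕ → ℝ)
    (hrep : P = ∑ i ∈ Finset.range (n+1), Polynomial.C (β i) * bern n i a b) :
    (∀ i ≤ n, (mobius P n a b).coeff i = β (n-i) * (n.choose i : ℝ)) ∧
    var P n a b = signVar (fun i => β i) n := by
  have hcoeff : ∀ i ≤ n, (mobius P n a b).coeff i = β (n - i) * (n.choose i : ℝ) := by
    intro i hi
    rw [hrep, mobius_sum_bern β hab.ne, coeff_sum_C_mul_X_pow_sub hi, Nat.choose_symm hi]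
  refine ⟨hcoeff, ?_⟩
  calc var P n a b = signVar (fun i => β (n - i)) n :=
        signVar_congr_of_pos (fun i hi => Nat.cast_pos.2 (n.choose_pos hi))
          (fun i hi => (hcoeff i hi).trans (mul_comm _ _))
    _ = signVar β n := signVar_reverse β

/-- p_{I,i} = b_{n-i}·C(n,i), hence var(P,I) equals the number of
    sign variations of the Bernstein coefficient sequence. -/
theorem stmt10 (P : Polynomial ℝ) (n : ℕ) (hdeg : P.natDegree = n)
    (a b : ℝ) (hab : a < b) (β : ℕ → ℝ)
    (hrep : P = ∑ i ∈ Finset.range (n+1), Polynomial.C (β i) * bern n i a b) :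
    (∀ i ≤ n, (mobius P n a b).coeff i = β (n-i) * (n.choose i : ℝ)) ∧
    var P n a b = signVar (fun i => β i) n :=
  stmt10_general P n a b hab β hrep
end

section
/- One-circle theorem: Let P be a real polynomial of degree n and I = (a,b) an open interval. If the open disk Δ(I) in the complex plane with center (a+b)/2 and radius (b-a)/2 contains no root of P, then var(P, I) = 0. -/
/-!
The map `z ↦ (a z + b) / (z + 1)` sends the open right half-plane onto the disk `Δ(I)`, and
`P_I(z) = (z + 1)^n P((a z + b) / (z + 1))`. So if `P` has no root in `Δ(I)`, every complex root
of `P_I` has non-positive real part. Such a real polynomial is a product of its leading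
coefficient and factors `X - c` with `c ≤ 0` and `X² - 2 Re(z) X + |z|²` with `Re z ≤ 0`, all of
which have non-negative coefficients; hence all coefficients of `P_I` have the same sign.
-/

open Polynomial Finset

lemma coeff_X_sub_C_nonneg {c : ℝ} (hc : c ≤ 0) (k : ℕ) : 0 ≤ (X - C c).coeff k := by
  rcases k with _ | _ | k <;> simp [coeff_X, coeff_C, hc]

lemma coeff_quadratic_nonneg {z : ℂ} (hz : z.re ≤ 0) (k : ℕ) :
    0 ≤ (X ^ 2 - C (2 * z.re) * X + C (‖z‖ ^ 2)).coeff k := by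
  simp only [coeff_add, coeff_sub, coeff_C_mul, coeff_X_pow, coeff_X, coeff_C]
  rcases k with _ | _ | _ | k <;> simp; nlinarith

lemma exists_monic_dvd_coeff_nonneg {Q : ℝ[X]} {z : ℂ} (hz : aeval z Q = 0) (hre : z.re ≤ 0) :
    ∃ D : ℝ[X], D.Monic ∧ 0 < D.natDegree ∧ D ∣ Q ∧ ∀ k, 0 ≤ D.coeff k := by
  rcases eq_or_ne z.im 0 with him | him
  · refine ⟨X - C z.re, monic_X_sub_C _, by simp, ?_, coeff_X_sub_C_nonneg hre⟩
    have hz_real : (z.re : ℂ) = z := Complex.ext rfl (by simp [him])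
    rw [← hz_real, ← Complex.coe_algebraMap, aeval_algebraMap_apply_eq_algebraMap_eval,
      map_eq_zero_iff _ (algebraMap ℝ ℂ).injective] at hz
    exact dvd_iff_isRoot.mpr hz
  · refine ⟨_, by monicity!, ?_, quadratic_dvd_of_aeval_eq_zero_im_ne_zero Q hz him,
      coeff_quadratic_nonneg hre⟩
    have h_deg : (X ^ 2 - C (2 * z.re) * X + C (‖z‖ ^ 2)).natDegree = 2 := by compute_degree!
    omega

lemma leadingCoeff_mul_coeff_nonneg_of_roots_re_nonpos {Q : ℝ[X]}
    (hQ : ∀ z : ℂ, aeval z Q = 0 → z.re ≤ 0) (k : ℕ) : 0 ≤ Q.leadingCoeff * Q.coeff k := by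
  induction h : Q.natDegree using Nat.strong_induction_on generalizing Q k with
  | _ N ih =>
    rcases Nat.eq_zero_or_pos N with rfl | hpos
    · rw [eq_C_of_natDegree_eq_zero h, leadingCoeff_C, coeff_C]
      split_ifs
      · exact mul_self_nonneg _
      · simp
    have hQ0 : Q ≠ 0 := by rintro rfl; simp at h; omega
    obtain ⟨z, hz⟩ := IsAlgClosed.exists_aeval_eq_zero ℂ Q
      (by rw [degree_eq_natDegree hQ0, h]; exact_mod_cast hpos.ne')
    obtain ⟨D, hD_monic, hD_deg, ⟨Q₁, rfl⟩, hD_coeff⟩ := exists_monic_dvd_coeff_nonneg hz (hQ z hz)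
    have hQ₁0 : Q₁ ≠ 0 := by rintro rfl; simp at hQ0
    have hQ₁ : ∀ w : ℂ, aeval w Q₁ = 0 → w.re ≤ 0 := fun w hw => hQ w (by simp [hw])
    have hQ₁_deg : Q₁.natDegree < N := by
      rw [← h, natDegree_mul hD_monic.ne_zero hQ₁0]; omega
    rw [leadingCoeff_mul, hD_monic.leadingCoeff, one_mul, coeff_mul, mul_sum]
    refine sum_nonneg fun x _ => ?_
    rw [mul_left_comm]
    exact mul_nonneg (hD_coeff _) (ih _ hQ₁_deg hQ₁ _ rfl)

lemma coeff_mul_coeff_nonneg_of_roots_re_nonpos {Q : ℝ[X]}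
    (hQ : ∀ z : ℂ, aeval z Q = 0 → z.re ≤ 0) (i j : ℕ) : 0 ≤ Q.coeff i * Q.coeff j := by
  rcases eq_or_ne Q 0 with rfl | hQ0
  · simp
  have hprod := mul_nonneg (leadingCoeff_mul_coeff_nonneg_of_roots_re_nonpos hQ i)
    (leadingCoeff_mul_coeff_nonneg_of_roots_re_nonpos hQ j)
  rw [mul_mul_mul_comm, ← sq] at hprod
  have hlc : Q.leadingCoeff ≠ 0 := leadingCoeff_ne_zero.mpr hQ0
  exact nonneg_of_mul_nonneg_right hprod (by positivity)

lemma signVar_eq_zero_of_mul_nonneg {f : ℕ → ℝ} (hf : ∀ i j, 0 ≤ f i * f j) (N : ℕ) :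
    signVar f N = 0 := by
  rw [signVar, card_eq_zero, filter_eq_empty_iff]
  exact fun q _ hq => (hf q.1 q.2).not_gt hq.2.1

lemma aeval_mobius {K : Type*} [Field K] [Algebra ℝ K] {P : ℝ[X]} {n : ℕ} (hP : P.natDegree ≤ n)
    (a b : ℝ) {z : K} (hz : z + 1 ≠ 0) :
    aeval z (mobius P n a b) =
      (z + 1) ^ n * aeval ((algebraMap ℝ K a * z + algebraMap ℝ K b) / (z + 1)) P := by
  rw [aeval_eq_sum_range' (Nat.lt_succ_of_le hP), mul_sum, mobius, map_sum]
  refine sum_congr rfl fun i hi => ?_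
  have hsplit : (z + 1) ^ n = (z + 1) ^ i * (z + 1) ^ (n - i) := by
    rw [← pow_add, Nat.add_sub_cancel' (Nat.lt_succ_iff.mp (mem_range.mp hi))]
  simp only [map_mul, map_pow, map_add, aeval_C, aeval_X, map_one, Algebra.smul_def, hsplit,
    div_pow]
  field_simp

lemma norm_mobius_sub_midpoint_lt {a b : ℝ} (hab : a < b) {z : ℂ} (hz : 0 < z.re) :
    ‖(a * z + b) / (z + 1) - ((a + b) / 2 : ℝ)‖ < (b - a) / 2 := by
  have hz1 : z + 1 ≠ 0 := ne_of_apply_ne Complex.re (by simp; linarith)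
  have h_closer : ‖1 - z‖ < ‖z + 1‖ := by
    rw [← sq_lt_sq₀ (norm_nonneg _) (norm_nonneg _), Complex.sq_norm, Complex.sq_norm,
      Complex.normSq_apply, Complex.normSq_apply]
    simp only [Complex.sub_re, Complex.sub_im, Complex.add_re, Complex.add_im, Complex.one_re,
      Complex.one_im]
    nlinarith
  calc ‖(a * z + b) / (z + 1) - ((a + b) / 2 : ℝ)‖
      = (b - a) / 2 * (‖1 - z‖ / ‖z + 1‖) := by
        rw [← norm_div, show (a * z + b) / (z + 1) - ((a + b) / 2 : ℝ) =
          ((b - a) / 2 : ℝ) * ((1 - z) / (z + 1)) by push_cast; field_simp; ring,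
          norm_mul, Complex.norm_real, Real.norm_of_nonneg (by linarith)]
    _ < (b - a) / 2 * 1 :=
        mul_lt_mul_of_pos_left ((div_lt_one (norm_pos_iff.mpr hz1)).mpr h_closer) (by linarith)
    _ = (b - a) / 2 := mul_one _

lemma re_nonpos_of_aeval_mobius_eq_zero {P : ℝ[X]} {n : ℕ} (hP : P.natDegree ≤ n) {a b : ℝ}
    (hab : a < b)
    (hnoroot : ∀ w : ℂ, ‖w - (((a + b) / 2 : ℝ) : ℂ)‖ < (b - a) / 2 → aeval w P ≠ 0)
    {z : ℂ} (hz : aeval z (mobius P n a b) = 0) : z.re ≤ 0 := by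
  by_contra! hre
  have hz1 : z + 1 ≠ 0 := ne_of_apply_ne Complex.re (by simp; linarith)
  rw [aeval_mobius hP a b hz1] at hz
  exact hnoroot _ (norm_mobius_sub_midpoint_lt hab hre)
    ((mul_eq_zero.mp hz).resolve_left (pow_ne_zero n hz1))

theorem stmt12_general (P : Polynomial ℝ) (n : ℕ) (hdeg : P.natDegree = n)
    (a b : ℝ) (hab : a < b)
    (hnoroot : ∀ w : ℂ, ‖w - (((a+b)/2 : ℝ) : ℂ)‖ < (b-a)/2 →
      (Polynomial.aeval w) P ≠ 0) :
    var P n a b = 0 :=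
  signVar_eq_zero_of_mul_nonneg (coeff_mul_coeff_nonneg_of_roots_re_nonpos fun _ hz =>
    re_nonpos_of_aeval_mobius_eq_zero hdeg.le hab hnoroot hz) n

/-- one-circle theorem. If the open disk with center (a+b)/2 and radius
    (b-a)/2 contains no complex root of P, then var(P,(a,b)) = 0. -/
theorem stmt12 (P : Polynomial ℝ) (n : ℕ) (hdeg : P.natDegree = n) (hP : P ≠ 0)
    (a b : ℝ) (hab : a < b)
    (hnoroot : ∀ w : ℂ, ‖w - (((a+b)/2 : ℝ) : ℂ)‖ < (b-a)/2 →
      (Polynomial.aeval w) P ≠ 0) :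
    var P n a b = 0 :=
  stmt12_general P n hdeg a b hab hnoroot
end

section
/- Lower bound at a well-separated evaluation point: Let P be a real polynomial of degree n with |P_n| ≥ 1/4, let m ∈ ℝ, ε > 0, and K ≥ 2⌈n/2⌉ real. Consider the multipoint m[ε] = {m + (i - ⌈n/2⌉)ε : i = 0,...,2⌈n/2⌉}. If the disk Δ of radius K·ε centered at m contains at least two roots of P, then there exists a point m₀ ∈ m[ε] with distance ≥ ε/2 to all roots of P, and for every such m₀ and every root z_i ∈ Δ, |P(m₀)| > 2^{-4n+1}·K^{-μ(Δ)-1}·σ(z_i,P)·|P'(z_i)|, where μ(Δ) is the number of roots of P in Δ. -/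
/-!
Let `m₀` be a point of `m[ε]` at distance `≥ ε/2` from every root; it lies within `Kε/2` of `m`.
Then `|z_i - z_j| ≤ 4K |m₀ - z_j|` for roots `z_j ∈ Δ` and `|z_i - z_j| ≤ 4 |m₀ - z_j|` for the
others, and `σ(z_i, P) < 2Kε ≤ 4K |m₀ - z_i|` because `Δ` holds a second root. Multiplying these
`n` bounds compares `σ(z_i, P) |P'(z_i)| = |P_n| σ(z_i, P) ∏_{j ≠ i} |z_i - z_j|` with
`|P(m₀)| = |P_n| ∏_j |m₀ - z_j|` at the cost `(4K)^μ 4^(n-μ)`, which `2^(-4n+1) K^(-μ-1)` more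
than absorbs. Such an `m₀` exists by pigeonhole: `m[ε]` has `2⌈n/2⌉ + 1 > n` points, pairwise
`ε` apart, and each root is within `ε/2` of at most one of them.
-/

open Polynomial Finset

section Factorization

variable {n : ℕ} {p : ℝ[X]} {z : Fin n → ℂ}

theorem norm_aeval_eq_prod
    (hfact : p.map (algebraMap ℝ ℂ) = C ((p.leadingCoeff : ℝ) : ℂ) * ∏ i, (X - C (z i)))
    (x : ℂ) : ‖aeval x p‖ = |p.leadingCoeff| * ∏ j, ‖x - z j‖ := by
  rw [aeval_def, eval₂_eq_eval_map, hfact, eval_mul, eval_C, ← Lagrange.nodal_eq,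
    Lagrange.eval_nodal, norm_mul, norm_prod, Complex.norm_real, Real.norm_eq_abs]

theorem abs_eval_eq_prod
    (hfact : p.map (algebraMap ℝ ℂ) = C ((p.leadingCoeff : ℝ) : ℂ) * ∏ i, (X - C (z i)))
    (x : ℝ) : |p.eval x| = |p.leadingCoeff| * ∏ j, ‖(x : ℂ) - z j‖ := by
  rw [← norm_aeval_eq_prod hfact, ← Complex.coe_algebraMap,
    aeval_algebraMap_apply_eq_algebraMap_eval, Complex.coe_algebraMap, Complex.norm_real,
    Real.norm_eq_abs]

theorem norm_aeval_derivative_eq_prod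
    (hfact : p.map (algebraMap ℝ ℂ) = C ((p.leadingCoeff : ℝ) : ℂ) * ∏ i, (X - C (z i)))
    (i : Fin n) :
    ‖aeval (z i) (derivative p)‖ = |p.leadingCoeff| * ∏ j ∈ univ.erase i, ‖z i - z j‖ := by
  rw [aeval_def, eval₂_eq_eval_map, ← derivative_map, hfact, derivative_C_mul, eval_mul, eval_C,
    ← Lagrange.nodal_eq, Lagrange.eval_nodal_derivative_eval_node_eq (mem_univ i),
    Lagrange.eval_nodal, norm_mul, norm_prod, Complex.norm_real, Real.norm_eq_abs]

end Factorization

theorem prod_le_pow_card_filter_mul_pow_card_filter_not_mul_prod {ι : Type*} {s : Finset ι}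
    (P : ι → Prop) [DecidablePred P] {f g : ι → ℝ} {a b : ℝ} (hf : ∀ j ∈ s, 0 ≤ f j)
    (hP : ∀ j ∈ s, P j → f j ≤ a * g j) (hnP : ∀ j ∈ s, ¬P j → f j ≤ b * g j) :
    ∏ j ∈ s, f j ≤ a ^ #{j ∈ s | P j} * b ^ #{j ∈ s | ¬P j} * ∏ j ∈ s, g j := by
  calc ∏ j ∈ s, f j ≤ ∏ j ∈ s, (if P j then a else b) * g j := by
        refine prod_le_prod hf fun j hj ↦ ?_
        split_ifs with h
        exacts [hP j hj h, hnP j hj h]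
    _ = _ := by rw [prod_mul_distrib, prod_ite, prod_const, prod_const]

section Disk

variable {E : Type*} [SeminormedAddCommGroup E] {u v w c : E} {K ε r d : ℝ}

theorem norm_sub_le_four_mul_mul_of_norm_sub_lt (hK : 0 ≤ K) (hu : ‖u - c‖ < K * ε)
    (hv : ‖v - c‖ < K * ε) (hd : ε / 2 ≤ d) : ‖u - v‖ ≤ 4 * K * d := by
  have := norm_sub_le_norm_sub_add_norm_sub u c v
  rw [norm_sub_rev c v] at this
  nlinarith

theorem norm_sub_le_four_mul_of_le_norm_sub (hu : ‖u - c‖ < r) (hv : r ≤ ‖v - c‖)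
    (hw : ‖w - c‖ ≤ r / 2) : ‖u - v‖ ≤ 4 * ‖w - v‖ := by
  have huv := norm_sub_le_norm_sub_add_norm_sub u c v
  have hvw := norm_sub_le_norm_sub_add_norm_sub v w c
  rw [norm_sub_rev c v] at huv
  rw [norm_sub_rev v w] at hvw
  linarith

end Disk

theorem mul_prod_erase_norm_sub_le {E ι : Type*} [SeminormedAddCommGroup E] [Fintype ι]
    [DecidableEq ι] {z : ι → E} {w c : E} {K ε σ : ℝ} (hK : 0 ≤ K)
    (hw : ‖w - c‖ ≤ K * ε / 2) (hfar : ∀ j, ε / 2 ≤ ‖w - z j‖) {i : ι}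
    (hi : ‖z i - c‖ < K * ε) (hσ0 : 0 ≤ σ) (hσ : ∃ j ≠ i, ‖z j - c‖ < K * ε ∧ σ ≤ ‖z i - z j‖) :
    σ * ∏ j ∈ univ.erase i, ‖z i - z j‖ ≤
      (4 * K) ^ #{j | ‖z j - c‖ < K * ε} * 4 ^ #{j | ¬‖z j - c‖ < K * ε} * ∏ j, ‖w - z j‖ := by
  -- `σ` fills the slot of the missing factor `j = i`, bounded like a factor with `z j` near `c`.
  rw [← sdiff_singleton_eq_erase, ← prod_update_of_mem (mem_univ i)]
  refine prod_le_pow_card_filter_mul_pow_card_filter_not_mul_prod _ (fun j _ ↦ ?_)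
    (fun j _ hj ↦ ?_) (fun j _ hj ↦ ?_)
  · rcases eq_or_ne j i with rfl | hji
    · simpa using hσ0
    · simp [hji]
  · rcases eq_or_ne j i with rfl | hji
    · obtain ⟨l, -, hl, hσl⟩ := hσ
      simpa using hσl.trans (norm_sub_le_four_mul_mul_of_norm_sub_lt hK hi hl (hfar j))
    · simpa [hji] using norm_sub_le_four_mul_mul_of_norm_sub_lt hK hi hj (hfar j)
  · have hji : j ≠ i := by rintro rfl; exact hj hi
    simpa [hji] using norm_sub_le_four_mul_of_le_norm_sub hi (not_lt.mp hj) hw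

theorem exists_forall_half_le_dist_of_card_lt {E ι κ : Type*} [PseudoMetricSpace E]
    [Fintype ι] [Fintype κ] {x : ι → E} {ε : ℝ} (hx : Pairwise fun a b ↦ ε ≤ dist (x a) (x b))
    (z : κ → E) (hcard : Fintype.card κ < Fintype.card ι) :
    ∃ a, ∀ j, ε / 2 ≤ dist (x a) (z j) := by
  by_contra! hclose
  choose g hg using hclose
  obtain ⟨a, b, hab, hg_eq⟩ := Fintype.exists_ne_map_eq_of_card_lt g hcard
  have hb := hg b
  rw [← hg_eq] at hb
  linarith [hx hab, hg a, dist_triangle_right (x a) (x b) (z (g a))]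

/-- The multipoint `m[ε]` consists of `multipoint m ε ⌈n/2⌉ i` for `0 ≤ i ≤ 2⌈n/2⌉`. -/
def multipoint (m ε : ℝ) (k i : ℕ) : ℝ := m + ((i : ℝ) - k) * ε

section Multipoint

variable {m ε : ℝ} {k : ℕ}

theorem abs_multipoint_sub_center_le (hε : 0 ≤ ε) {i : ℕ} (hi : i ≤ 2 * k) :
    |multipoint m ε k i - m| ≤ k * ε := by
  have hi' : (i : ℝ) ≤ 2 * k := by exact_mod_cast hi
  rw [multipoint, add_sub_cancel_left, abs_mul, abs_of_nonneg hε]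
  have hi0 : (0 : ℝ) ≤ i := i.cast_nonneg
  exact mul_le_mul_of_nonneg_right (abs_sub_le_iff.mpr ⟨by linarith, by linarith⟩) hε

theorem le_abs_multipoint_sub (hε : 0 ≤ ε) {a b : ℕ} (hab : a ≠ b) :
    ε ≤ |multipoint m ε k a - multipoint m ε k b| := by
  have h1 : (1 : ℝ) ≤ |(a : ℝ) - b| := by
    exact_mod_cast Int.one_le_abs (sub_ne_zero.mpr (by exact_mod_cast hab : (a : ℤ) ≠ b))
  have : multipoint m ε k a - multipoint m ε k b = ((a : ℝ) - b) * ε := by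
    simp only [multipoint]; ring
  rw [this, abs_mul, abs_of_nonneg hε]
  nlinarith

theorem exists_multipoint_forall_half_le_norm_sub {n : ℕ} (z : Fin n → ℂ) (hε : 0 ≤ ε)
    (hn : n ≤ 2 * k) : ∃ i ≤ 2 * k, ∀ j, ε / 2 ≤ ‖(multipoint m ε k i : ℂ) - z j‖ := by
  have hsep : Pairwise fun a b : Fin (2 * k + 1) ↦
      ε ≤ dist (multipoint m ε k a : ℂ) (multipoint m ε k b) := fun a b hab ↦ by
    dsimp only
    rw [Complex.dist_eq, ← Complex.ofReal_sub, Complex.norm_real, Real.norm_eq_abs]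
    exact le_abs_multipoint_sub hε (Fin.val_injective.ne hab)
  obtain ⟨a, ha⟩ := exists_forall_half_le_dist_of_card_lt hsep z (by simp; omega)
  exact ⟨a, Nat.lt_succ_iff.mp a.isLt, fun j ↦ by simpa [Complex.dist_eq] using ha j⟩

end Multipoint

theorem two_rpow_mul_rpow_mul_pow_le {n μ ν : ℕ} {K : ℝ} (hn : 1 ≤ n) (hK : 1 ≤ K)
    (hμν : μ + ν = n) :
    (2 : ℝ) ^ (-4 * (n : ℝ) + 1) * K ^ (-(μ : ℝ) - 1) * ((4 * K) ^ μ * 4 ^ ν) ≤ 1 / 2 := by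
  have h2 : (2 : ℝ) ^ (-4 * (n : ℝ) + 1) = 2 / 16 ^ n := by
    rw [Real.rpow_add two_pos, Real.rpow_one,
      show -4 * (n : ℝ) = -((4 * n : ℕ) : ℝ) by push_cast; ring,
      Real.rpow_neg zero_le_two, Real.rpow_natCast, pow_mul]
    norm_num [div_eq_inv_mul]
  have hK' : K ^ (-(μ : ℝ) - 1) = (K ^ (μ + 1))⁻¹ := by
    rw [← Real.rpow_natCast, ← Real.rpow_neg (by linarith)]
    push_cast; ring_nf
  have h4 : (4 * K) ^ μ * 4 ^ ν = 4 ^ n * K ^ μ := by rw [mul_pow, ← hμν, pow_add]; ring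
  have h16 : (16 : ℝ) ^ n = 4 ^ n * 4 ^ n := by rw [← mul_pow]; norm_num
  have h4n : (4 : ℝ) ≤ 4 ^ n := le_self_pow₀ (by norm_num) (by omega)
  rw [h2, hK', h4, h16, pow_succ]
  field_simp
  nlinarith

theorem stmt15_general (n : ℕ) (p : Polynomial ℝ)
    (hlc : 1/4 ≤ |p.leadingCoeff|)
    (z : Fin n → ℂ)
    (hfact : p.map (algebraMap ℝ ℂ) =
      Polynomial.C ((p.leadingCoeff : ℝ) : ℂ) * ∏ i, (Polynomial.X - Polynomial.C (z i)))
    (m ε K : ℝ) (hε : 0 < ε) (hK : ((2 * ((n+1)/2) : ℕ) : ℝ) ≤ K)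
    (htwo : ∃ i j : Fin n, i ≠ j ∧
      ‖z i - (m : ℂ)‖ < K * ε ∧ ‖z j - (m : ℂ)‖ < K * ε)
    (μ : ℕ)
    (hμ : μ = (Finset.univ.filter (fun j : Fin n =>
      ‖z j - (m : ℂ)‖ < K * ε)).card)
    (pts : ℕ → ℝ)
    (hpts : ∀ i : ℕ, pts i = m + ((i : ℝ) - (((n+1)/2 : ℕ) : ℝ)) * ε) :
    (∃ i₀ ≤ 2 * ((n+1)/2),
        ∀ j : Fin n, ε/2 ≤ ‖((pts i₀ : ℝ) : ℂ) - z j‖) ∧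
    (∀ i₀ ≤ 2 * ((n+1)/2),
      (∀ j : Fin n, ε/2 ≤ ‖((pts i₀ : ℝ) : ℂ) - z j‖) →
      ∀ i : Fin n, ‖z i - (m : ℂ)‖ < K * ε →
      ∀ σi : ℝ,
        ((∃ j : Fin n, j ≠ i ∧ ‖z i - z j‖ = σi) ∧
          ∀ j : Fin n, j ≠ i → σi ≤ ‖z i - z j‖) →
        (2:ℝ) ^ (-4*(n:ℝ)+1) * K ^ (-(μ:ℝ)-1) * σi *
            ‖(Polynomial.aeval (z i)) (Polynomial.derivative p)‖ <
          |p.eval (pts i₀)|) := by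
  obtain rfl : pts = multipoint m ε ((n + 1) / 2) := funext hpts
  refine ⟨exists_multipoint_forall_half_le_norm_sub z hε.le (by omega), ?_⟩
  rintro i₀ hi₀ hfar i hi σ ⟨⟨j, -, rfl⟩, hσ⟩
  set m₀ := multipoint m ε ((n + 1) / 2) i₀
  have hK1 : 1 ≤ K := le_trans (by exact_mod_cast (by omega : 1 ≤ 2 * ((n + 1) / 2))) hK
  have hm₀ : ‖(m₀ : ℂ) - m‖ ≤ K * ε / 2 := by
    rw [← Complex.ofReal_sub, Complex.norm_real, Real.norm_eq_abs]
    refine (abs_multipoint_sub_center_le hε.le hi₀).trans ?_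
    push_cast at hK
    nlinarith
  have hother : ∃ l ≠ i, ‖z l - m‖ < K * ε ∧ ‖z i - z j‖ ≤ ‖z i - z l‖ := by
    obtain ⟨a, b, hab, ha, hb⟩ := htwo
    rcases eq_or_ne a i with rfl | hai
    · exact ⟨b, hab.symm, hb, hσ b hab.symm⟩
    · exact ⟨a, hai, ha, hσ a hai⟩
  have hprod := mul_prod_erase_norm_sub_le (by linarith) hm₀ hfar hi (norm_nonneg _) hother
  set ν := #{l | ¬‖z l - m‖ < K * ε}
  have hμν : μ + ν = n := by
    rw [hμ, card_filter_add_card_filter_not, card_univ, Fintype.card_fin]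
  rw [← hμ] at hprod
  have hpos : 0 < |p.leadingCoeff| * ∏ l, ‖(m₀ : ℂ) - z l‖ :=
    mul_pos (by linarith) (prod_pos fun l _ ↦ by linarith [hfar l])
  rw [norm_aeval_derivative_eq_prod hfact, abs_eval_eq_prod hfact]
  calc _ = (2 : ℝ) ^ (-4 * (n : ℝ) + 1) * K ^ (-(μ : ℝ) - 1) * |p.leadingCoeff| *
          (‖z i - z j‖ * ∏ l ∈ univ.erase i, ‖z i - z l‖) := by ring
    _ ≤ (2 : ℝ) ^ (-4 * (n : ℝ) + 1) * K ^ (-(μ : ℝ) - 1) * |p.leadingCoeff| *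
          ((4 * K) ^ μ * 4 ^ ν * ∏ l, ‖(m₀ : ℂ) - z l‖) := by gcongr
    _ = (2 : ℝ) ^ (-4 * (n : ℝ) + 1) * K ^ (-(μ : ℝ) - 1) * ((4 * K) ^ μ * 4 ^ ν) *
          (|p.leadingCoeff| * ∏ l, ‖(m₀ : ℂ) - z l‖) := by ring
    _ ≤ 1 / 2 * (|p.leadingCoeff| * ∏ l, ‖(m₀ : ℂ) - z l‖) := by
          gcongr
          exact two_rpow_mul_rpow_mul_pow_le i.pos hK1 hμν
    _ < _ := by linarith

/-- Lemma on admissible points of a multipoint: if the disk of radius K·ε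
    around m contains at least two roots of P, then some point of the multipoint m[ε]
    has distance ≥ ε/2 to all roots, and at every such point m₀ the value |P(m₀)| is
    bounded below by 2^{-4n+1}·K^{-μ(Δ)-1}·σ(z_i,P)·|P'(z_i)| for every root z_i ∈ Δ. -/
theorem stmt15 (n : ℕ) (hn : 2 ≤ n) (p : Polynomial ℝ) (hdeg : p.natDegree = n)
    (hlc : 1/4 ≤ |p.leadingCoeff|)
    (z : Fin n → ℂ)
    (hfact : p.map (algebraMap ℝ ℂ) =
      Polynomial.C ((p.leadingCoeff : ℝ) : ℂ) * ∏ i, (Polynomial.X - Polynomial.C (z i)))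
    (m ε K : ℝ) (hε : 0 < ε) (hK : ((2 * ((n+1)/2) : ℕ) : ℝ) ≤ K)
    (htwo : ∃ i j : Fin n, i ≠ j ∧
      ‖z i - (m : ℂ)‖ < K * ε ∧ ‖z j - (m : ℂ)‖ < K * ε)
    (μ : ℕ)
    (hμ : μ = (Finset.univ.filter (fun j : Fin n =>
      ‖z j - (m : ℂ)‖ < K * ε)).card)
    (pts : ℕ → ℝ)
    (hpts : ∀ i : ℕ, pts i = m + ((i : ℝ) - (((n+1)/2 : ℕ) : ℝ)) * ε) :
    (∃ i₀ ≤ 2 * ((n+1)/2),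
        ∀ j : Fin n, ε/2 ≤ ‖((pts i₀ : ℝ) : ℂ) - z j‖) ∧
    (∀ i₀ ≤ 2 * ((n+1)/2),
      (∀ j : Fin n, ε/2 ≤ ‖((pts i₀ : ℝ) : ℂ) - z j‖) →
      ∀ i : Fin n, ‖z i - (m : ℂ)‖ < K * ε →
      ∀ σi : ℝ,
        ((∃ j : Fin n, j ≠ i ∧ ‖z i - z j‖ = σi) ∧
          ∀ j : Fin n, j ≠ i → σi ≤ ‖z i - z j‖) →
        (2:ℝ) ^ (-4*(n:ℝ)+1) * K ^ (-(μ:ℝ)-1) * σi *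
            ‖(Polynomial.aeval (z i)) (Polynomial.derivative p)‖ <
          |p.eval (pts i₀)|) :=
  stmt15_general n p hlc z hfact m ε K hε hK htwo μ hμ pts hpts
end

section
/- Abstract quadratic-interval-refinement sequence bound: Let w > w' > 0 be reals and m ≥ 1 an integer. Define a sequence (x_i, n_i) with (x_1,n_1) = (w,m) and, writing N_i = 2^{2^{n_i}}: if x_i/N_i ≥ w', then x_{i+1} = ε_i·x_i for some ε_i ∈ [0, 1/N_i] and n_{i+1} = n_i + 1; otherwise x_{i+1} = δ_i·x_i for some δ_i ∈ [0, 3/4] and n_{i+1} = max(1, n_i - 1). Then the smallest index i₀ with x_{i₀} ≤ w' satisfies i₀ ≤ 8·(n_1 + log₂ log₂ max(4, w/w')). -/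
/-!
Track the state `(xᵢ, nᵢ)` through `yᵢ = log₂ (xᵢ / w')`, which is positive as long as `xᵢ > w'`,
and the potential `Φ(n, y) = n + 3 (max (log₂ y) 0 + max (log₂ y - n - 1) 0 + min y 2)`.
A refining step (`y ≥ 2ⁿ`) gives `y' ≤ y - 2ⁿ`, so by AM-GM `log₂ y' ≤ 2 log₂ y - n - 2`;
a fallback step (`y ≤ 2ⁿ`) gives `y' ≤ y + log₂ (3/4) ≤ y - 2/5`. Either way `Φ` drops by at
least `1`. Since `Φ ≥ 0` and `Φ(m, y₁) ≤ m + 6 log₂ log₂ max(4, w/w') + 6`, the bound follows.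
-/

open Real

namespace QIR

noncomputable def potential (n : ℕ) (y : ℝ) : ℝ :=
  n + 3 * (max (logb 2 y) 0 + max (logb 2 y - n - 1) 0 + min y 2)

lemma potential_nonneg (n : ℕ) {y : ℝ} (hy : 0 ≤ y) : 0 ≤ potential n y := by
  unfold potential
  have : 0 ≤ min y 2 := le_min hy zero_le_two
  positivity

lemma logb_add_logb_add_two_le {t y y' : ℝ} (ht : 0 < t) (hy' : 0 < y') (h : y' ≤ y - t) :
    logb 2 t + logb 2 y' + 2 ≤ 2 * logb 2 y := by
  have hy : 0 < y := by linarith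
  have key : 2 ^ 2 * (t * y') ≤ y ^ 2 := by nlinarith [sq_nonneg (y - 2 * t)]
  have := logb_le_logb_of_le one_lt_two (by positivity) key
  rw [logb_mul (by positivity) (by positivity), logb_mul ht.ne' hy'.ne', logb_pow, logb_pow,
    logb_self_eq_one one_lt_two] at this
  push_cast at this
  linarith

lemma logb_three_quarters_le : logb 2 (3 / 4) ≤ -(2 / 5) := by
  have := logb_le_logb_of_le one_lt_two (by norm_num) (by norm_num : 2 ^ 2 * ((3 : ℝ) / 4) ^ 5 ≤ 1)
  rw [logb_mul (by norm_num) (by norm_num), logb_pow, logb_pow, logb_self_eq_one one_lt_two,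
    logb_one] at this
  push_cast at this
  linarith

lemma natCast_le_logb_iff {n : ℕ} {y : ℝ} (hy : 0 < y) : (n : ℝ) ≤ logb 2 y ↔ 2 ^ n ≤ y := by
  rw [le_logb_iff_rpow_le one_lt_two hy, rpow_natCast]

lemma logb_le_natCast_iff {n : ℕ} {y : ℝ} (hy : 0 < y) : logb 2 y ≤ n ↔ y ≤ 2 ^ n := by
  rw [logb_le_iff_le_rpow one_lt_two hy, rpow_natCast]

lemma potential_succ_add_one_le {n : ℕ} {y y' : ℝ} (hn : 1 ≤ n) (hy : 2 ^ n ≤ y) (hy' : 0 < y')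
    (hyy' : y' ≤ y - 2 ^ n) : potential (n + 1) y' + 1 ≤ potential n y := by
  have h2n : (2 : ℝ) ≤ 2 ^ n := by simpa using pow_le_pow_right₀ one_le_two hn
  have hn_le : (n : ℝ) ≤ logb 2 y := (natCast_le_logb_iff (by linarith)).2 hy
  have hdecr : logb 2 y' ≤ logb 2 y := logb_le_logb_of_le one_lt_two hy' (by linarith)
  have hamgm := logb_add_logb_add_two_le (pow_pos two_pos n) hy' hyy'
  rw [logb_pow, logb_self_eq_one one_lt_two, mul_one] at hamgm
  have hn1 : (1 : ℝ) ≤ n := by exact_mod_cast hn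
  have hmin' : min y' 2 ≤ 2 := min_le_right _ _
  unfold potential
  rw [min_eq_right (by linarith : (2 : ℝ) ≤ y)]
  push_cast
  simp only [max_def]
  split_ifs <;> linarith

lemma potential_max_one_sub_one_add_one_le {n : ℕ} {y y' : ℝ} (hn : 1 ≤ n) (hy : y ≤ 2 ^ n)
    (hy' : 0 < y') (hyy' : y' ≤ y - 2 / 5) : potential (max 1 (n - 1)) y' + 1 ≤ potential n y := by
  have hle_n : logb 2 y ≤ n := (logb_le_natCast_iff (by linarith)).2 hy
  have hdecr : logb 2 y' ≤ logb 2 y := logb_le_logb_of_le one_lt_two hy' (by linarith)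
  have hmin : min y' 2 ≤ min y 2 := min_le_min_right 2 (by linarith)
  rcases Nat.lt_or_ge n 2 with hn1 | hn2
  · obtain rfl : n = 1 := by omega
    have hmin' : min y' 2 ≤ min y 2 - 2 / 5 := by
      rw [min_eq_left (show y ≤ 2 by simpa using hy)]
      exact (min_le_left _ _).trans hyy'
    unfold potential
    norm_num
    simp only [max_def]
    split_ifs <;> linarith
  · rw [max_eq_right (by omega)]
    unfold potential
    push_cast [Nat.cast_sub (by omega : 1 ≤ n)]
    simp only [max_def]
    split_ifs <;> linarith

lemma potential_logb_div_add_one_le {w' a b : ℝ} {n n' : ℕ} (hw' : 0 < w') (hn : 1 ≤ n)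
    (hb : w' < b)
    (hstep : (w' ≤ a / 2 ^ 2 ^ n →
        (∃ ε : ℝ, 0 ≤ ε ∧ ε ≤ 1 / (2 : ℝ) ^ 2 ^ n ∧ b = ε * a) ∧ n' = n + 1) ∧
      (a / 2 ^ 2 ^ n < w' →
        (∃ δ : ℝ, 0 ≤ δ ∧ δ ≤ 3 / 4 ∧ b = δ * a) ∧ n' = max 1 (n - 1))) :
    potential n' (logb 2 (b / w')) + 1 ≤ potential n (logb 2 (a / w')) := by
  have hy' : 0 < logb 2 (b / w') := logb_pos one_lt_two ((one_lt_div hw').2 hb)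
  have hlogN : logb 2 ((2 : ℝ) ^ 2 ^ n) = 2 ^ n := by
    rw [logb_pow, logb_self_eq_one one_lt_two]
    push_cast
    ring
  have hN : (0 : ℝ) < 2 ^ 2 ^ n := by positivity
  rcases le_or_gt w' (a / 2 ^ 2 ^ n) with hrefine | hfallback
  · obtain ⟨⟨ε, -, hε, rfl⟩, rfl⟩ := hstep.1 hrefine
    have hN_le : (2 : ℝ) ^ 2 ^ n ≤ a / w' := by
      rw [le_div_iff₀ hw']
      rwa [le_div_iff₀ hN, mul_comm] at hrefine
    have ha : 0 < a / w' := hN.trans_le hN_le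
    have ha' : 0 < a := (div_pos_iff_of_pos_right hw').1 ha
    refine potential_succ_add_one_le hn (hlogN ▸ logb_le_logb_of_le one_lt_two hN hN_le) hy' ?_
    rw [← hlogN, ← logb_div ha.ne' hN.ne']
    refine logb_le_logb_of_le one_lt_two (div_pos (hw'.trans hb) hw') ?_
    calc ε * a / w' ≤ 1 / 2 ^ 2 ^ n * a / w' := by gcongr
      _ = a / w' / 2 ^ 2 ^ n := by ring
  · obtain ⟨⟨δ, hδ0, hδ, rfl⟩, rfl⟩ := hstep.2 hfallback
    have ha : 0 < a / w' := by
      have : 0 < δ * a := hw'.trans hb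
      exact div_pos (pos_of_mul_pos_right this hδ0) hw'
    refine potential_max_one_sub_one_add_one_le hn ?_ hy' ?_
    · rw [← hlogN]
      refine logb_le_logb_of_le one_lt_two ha ?_
      rw [div_le_iff₀ hw']
      rw [div_lt_iff₀ hN] at hfallback
      linarith
    · have hmono : logb 2 (δ * a / w') ≤ logb 2 (3 / 4 * (a / w')) := by
        refine logb_le_logb_of_le one_lt_two (div_pos (hw'.trans hb) hw') ?_
        rw [mul_div_assoc]
        gcongr
      rw [logb_mul (by norm_num) ha.ne'] at hmono
      linarith [logb_three_quarters_le]

lemma one_le_logb_logb_max_four (r : ℝ) : 1 ≤ logb 2 (logb 2 (max 4 r)) := by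
  have h4 : (0 : ℝ) < max 4 r := by positivity
  have h2 : 2 ≤ logb 2 (max 4 r) := by
    simpa using (natCast_le_logb_iff (n := 2) h4).2 (le_max_of_le_left (by norm_num))
  simpa using (natCast_le_logb_iff (n := 1) (by linarith)).2 (by simpa using h2)

lemma potential_logb_le (m : ℕ) {r : ℝ} (hr : 1 < r) :
    potential m (logb 2 r) ≤ m + 6 * logb 2 (logb 2 (max 4 r)) + 6 := by
  have hy : 0 < logb 2 r := logb_pos one_lt_two hr
  have hL := one_le_logb_logb_max_four r
  have hR : logb 2 (logb 2 r) ≤ logb 2 (logb 2 (max 4 r)) :=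
    logb_le_logb_of_le one_lt_two hy
      (logb_le_logb_of_le one_lt_two (by linarith) (le_max_right _ _))
  have hmin : min (logb 2 r) 2 ≤ 2 := min_le_right _ _
  have hmax : max (logb 2 (logb 2 r)) 0 ≤ logb 2 (logb 2 (max 4 r)) := max_le hR (by linarith)
  have hmax' : max (logb 2 (logb 2 r) - m - 1) 0 ≤ logb 2 (logb 2 (max 4 r)) :=
    max_le (by linarith [(Nat.cast_nonneg m : (0 : ℝ) ≤ m)]) (by linarith)
  unfold potential
  linarith

end QIR

theorem stmt18_general (w w' : ℝ) (hw' : 0 < w') (hww : w' < w)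
    (m : ℕ) (hm : 1 ≤ m) (x : ℕ → ℝ) (nseq : ℕ → ℕ)
    (hpos : ∀ i, 1 ≤ i → 1 ≤ nseq i)
    (hx1 : x 1 = w) (hn1 : nseq 1 = m)
    (hstep : ∀ i, 1 ≤ i →
      (w' ≤ x i / 2^(2^(nseq i)) →
        (∃ ε : ℝ, 0 ≤ ε ∧ ε ≤ 1/(2:ℝ)^(2^(nseq i)) ∧ x (i+1) = ε * x i) ∧
          nseq (i+1) = nseq i + 1) ∧
      (x i / 2^(2^(nseq i)) < w' →
        (∃ δ : ℝ, 0 ≤ δ ∧ δ ≤ 3/4 ∧ x (i+1) = δ * x i) ∧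
          nseq (i+1) = max 1 (nseq i - 1)))
    (i₀ : ℕ)
    (hmin : ∀ j, 1 ≤ j → j < i₀ → w' < x j) :
    (i₀ : ℝ) ≤ 8 * ((m : ℝ) + Real.logb 2 (Real.logb 2 (max 4 (w / w')))) := by
  set L := Real.logb 2 (Real.logb 2 (max 4 (w / w')))
  have hL : 1 ≤ L := QIR.one_le_logb_logb_max_four _
  have hm' : (1 : ℝ) ≤ m := by exact_mod_cast hm
  rcases Nat.lt_or_ge i₀ 2 with hsmall | hi₀
  · have : (i₀ : ℝ) ≤ 1 := by exact_mod_cast Nat.le_of_lt_succ hsmall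
    linarith
  obtain ⟨k, rfl⟩ : ∃ k, i₀ = k + 1 := ⟨i₀ - 1, by omega⟩
  have hk : 1 ≤ k := by omega
  set Φ : ℕ → ℝ := fun i => QIR.potential (nseq i) (Real.logb 2 (x i / w'))
  have hanti : AntitoneOn (fun i => Φ i + i) (Set.Icc 1 k) := by
    refine antitoneOn_of_succ_le Set.ordConnected_Icc fun i _ hi hi' => ?_
    simp only [Order.succ_eq_add_one, Set.mem_Icc] at hi hi' ⊢
    have := QIR.potential_logb_div_add_one_le hw' (hpos i hi.1) (hmin (i + 1) (by omega) (by omega))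
      (hstep i hi.1)
    push_cast
    linarith
  have htel : Φ k + k ≤ Φ 1 + 1 := by simpa using hanti ⟨le_rfl, hk⟩ ⟨hk, le_rfl⟩ hk
  have hlast : 0 ≤ Φ k := QIR.potential_nonneg _
    (Real.logb_nonneg one_lt_two ((one_le_div hw').2 (hmin k hk (by omega)).le))
  have hfirst : Φ 1 ≤ m + 6 * L + 6 := by
    simpa [Φ, hx1, hn1] using QIR.potential_logb_le m ((one_lt_div hw').2 hww)
  push_cast
  linarith

/-- abstract quadratic-interval-refinement sequence bound. The smallest
    index i₀ ≥ 1 with x_{i₀} ≤ w' satisfies i₀ ≤ 8·(n₁ + log₂ log₂ max(4, w/w')). -/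
theorem stmt18 (w w' : ℝ) (hw' : 0 < w') (hww : w' < w)
    (m : ℕ) (hm : 1 ≤ m) (x : ℕ → ℝ) (nseq : ℕ → ℕ)
    (hpos : ∀ i, 1 ≤ i → 1 ≤ nseq i)
    (hx1 : x 1 = w) (hn1 : nseq 1 = m)
    (hstep : ∀ i, 1 ≤ i →
      (w' ≤ x i / 2^(2^(nseq i)) →
        (∃ ε : ℝ, 0 ≤ ε ∧ ε ≤ 1/(2:ℝ)^(2^(nseq i)) ∧ x (i+1) = ε * x i) ∧
          nseq (i+1) = nseq i + 1) ∧
      (x i / 2^(2^(nseq i)) < w' →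
        (∃ δ : ℝ, 0 ≤ δ ∧ δ ≤ 3/4 ∧ x (i+1) = δ * x i) ∧
          nseq (i+1) = max 1 (nseq i - 1)))
    (i₀ : ℕ) (hi₀ : 1 ≤ i₀) (hle : x i₀ ≤ w')
    (hmin : ∀ j, 1 ≤ j → j < i₀ → w' < x j) :
    (i₀ : ℝ) ≤ 8 * ((m : ℝ) + Real.logb 2 (Real.logb 2 (max 4 (w / w')))) :=
  stmt18_general w w' hw' hww m hm x nseq hpos hx1 hn1 hstep i₀ hmin
end

section
/- Distance from a point in an isolating interval to the other roots: Let P be a square-free real polynomial of degree n, and let I = (a,b) be an interval such that the Obreshkoff lens L_n of I contains the root z_k of P and no other root. Then for every x ∈ I and every root z_j with j ≠ k, |x - z_j| > min(|x - a|, |x - b|)/(4n). -/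
/-!
A point `z` outside the Obreshkoff lens lies outside one of its two circles, of centre `c` and
radius `R`. For a real `x` between `a` and `b`, the power of `x` with respect to that circle is
`‖x - c‖² - R² = -(x - a)(b - x)`, so `‖x - z‖ ≥ R - ‖x - c‖ ≥ (x - a)(b - x) / (2R)`.
With `R = (b - a) / (2 sin θ)` and Jordan's inequality `sin (π / (n + 2)) ≥ 2 / (n + 2)` this is
at least `min (x - a) (b - x) / (n + 2)`, which exceeds the claimed bound.
-/

open Complex Set

/-- The paper's lens `L_n` is `obreshkoffLens a b (π / (n + 2))`. -/
def obreshkoffLens (a b θ : ℝ) : Set ℂ :=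
  {w : ℂ |
    ‖w - ((((a+b)/2 : ℝ) : ℂ) + (((b-a)/2 / Real.tan θ : ℝ) : ℂ) * I)‖ <
      (b-a)/(2 * Real.sin θ) ∧
    ‖w - ((((a+b)/2 : ℝ) : ℂ) - (((b-a)/2 / Real.tan θ : ℝ) : ℂ) * I)‖ <
      (b-a)/(2 * Real.sin θ)}

lemma sub_le_norm_sub_of_le_norm_sub {E : Type*} [SeminormedAddCommGroup E] {z c w : E} {R : ℝ}
    (h : R ≤ ‖z - c‖) : R - ‖w - c‖ ≤ ‖w - z‖ := by
  have := norm_sub_le_norm_sub_add_norm_sub z w c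
  rw [norm_sub_rev z w] at this
  linarith

lemma sq_sub_sq_le_two_mul_mul_sub {R q : ℝ} (hR : 0 ≤ R) (hq : 0 ≤ q) (hqR : q ^ 2 ≤ R ^ 2) :
    R ^ 2 - q ^ 2 ≤ 2 * R * (R - q) := by
  have : q ≤ R := (pow_le_pow_iff_left₀ hq hR two_ne_zero).mp hqR
  nlinarith

lemma min_mul_add_div_two_le_mul {u v : ℝ} (hu : 0 ≤ u) (hv : 0 ≤ v) :
    min u v * ((u + v) / 2) ≤ u * v := by
  rcases le_total u v with h | h
  · rw [min_eq_left h]; nlinarith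
  · rw [min_eq_right h]; nlinarith

lemma two_div_le_sin_pi_div (n : ℕ) : 2 / ((n : ℝ) + 2) ≤ Real.sin (Real.pi / (n + 2)) := by
  have hn : (2 : ℝ) ≤ n + 2 := by linarith [n.cast_nonneg (α := ℝ)]
  calc 2 / ((n : ℝ) + 2) = 2 / Real.pi * (Real.pi / (n + 2)) := by
        field_simp
    _ ≤ Real.sin (Real.pi / (n + 2)) :=
        Real.mul_le_sin (by positivity) (div_le_div_of_nonneg_left Real.pi_pos.le two_pos hn)

lemma norm_ofReal_sub_add_mul_I_sq (x m t : ℝ) :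
    ‖(x : ℂ) - ((m : ℂ) + (t : ℂ) * I)‖ ^ 2 = (x - m) ^ 2 + t ^ 2 := by
  rw [Complex.sq_norm, Complex.normSq_apply]
  simp only [sub_re, add_re, sub_im, add_im, ofReal_re, ofReal_im, mul_re, mul_im, I_re, I_im]
  ring

lemma norm_ofReal_sub_sub_mul_I_sq (x m t : ℝ) :
    ‖(x : ℂ) - ((m : ℂ) - (t : ℂ) * I)‖ ^ 2 = (x - m) ^ 2 + t ^ 2 := by
  simpa [sub_eq_add_neg] using norm_ofReal_sub_add_mul_I_sq x m (-t)

/-- The power of the point `x` with respect to a circle through `a` and `b`. -/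
lemma sub_midpoint_sq_add_offset_sq {a b θ : ℝ} (hθ : Real.sin θ ≠ 0) (x : ℝ) :
    (x - (a + b) / 2) ^ 2 + ((b - a) / 2 / Real.tan θ) ^ 2 =
      ((b - a) / (2 * Real.sin θ)) ^ 2 - (x - a) * (b - x) := by
  rw [Real.tan_eq_sin_div_cos, div_div_eq_mul_div]
  field_simp
  linear_combination (b - a) ^ 2 * Real.sin_sq_add_cos_sq θ

lemma le_norm_sub_of_notMem_obreshkoffLens {a b θ x : ℝ} {z : ℂ} (hθ : 0 < Real.sin θ)
    (hx : x ∈ Ioo a b) (hz : z ∉ obreshkoffLens a b θ) :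
    (x - a) * (b - x) * Real.sin θ / (b - a) ≤ ‖(x : ℂ) - z‖ := by
  obtain ⟨hax, hxb⟩ := hx
  have hba : 0 < b - a := by linarith
  set R := (b - a) / (2 * Real.sin θ)
  have hR : 0 < R := by positivity
  have hpower := sub_midpoint_sq_add_offset_sq (a := a) (b := b) hθ.ne' x
  obtain ⟨c, hzc, hxc⟩ : ∃ c : ℂ, R ≤ ‖z - c‖ ∧ ‖(x : ℂ) - c‖ ^ 2 = R ^ 2 - (x - a) * (b - x) := by
    simp only [obreshkoffLens, mem_ofPred_eq, not_and_or, not_lt] at hz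
    rcases hz with hz | hz
    · exact ⟨_, hz, by rw [norm_ofReal_sub_add_mul_I_sq, hpower]⟩
    · exact ⟨_, hz, by rw [norm_ofReal_sub_sub_mul_I_sq, hpower]⟩
  have hxz := sub_le_norm_sub_of_le_norm_sub (w := (x : ℂ)) hzc
  have hsq := sq_sub_sq_le_two_mul_mul_sub hR.le (norm_nonneg _)
    (by nlinarith : ‖(x : ℂ) - c‖ ^ 2 ≤ R ^ 2)
  calc (x - a) * (b - x) * Real.sin θ / (b - a) = (x - a) * (b - x) / (2 * R) := by
        simp only [R]; field_simp
    _ ≤ R - ‖(x : ℂ) - c‖ := by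
        rw [div_le_iff₀ (by positivity)]
        linarith
    _ ≤ ‖(x : ℂ) - z‖ := hxz

theorem stmt19_general (n : ℕ) (z : Fin n → ℂ)
    (a b : ℝ) (k : Fin n)
    (lens : Set ℂ)
    (hlens : lens = {w : ℂ |
      ‖w - ((((a+b)/2 : ℝ) : ℂ) +
          (((b-a)/2 / Real.tan (Real.pi / (n+2)) : ℝ) : ℂ) * Complex.I)‖ <
        (b-a)/(2 * Real.sin (Real.pi / (n+2))) ∧
      ‖w - ((((a+b)/2 : ℝ) : ℂ) -
          (((b-a)/2 / Real.tan (Real.pi / (n+2)) : ℝ) : ℂ) * Complex.I)‖ <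
        (b-a)/(2 * Real.sin (Real.pi / (n+2)))})
    (hothers : ∀ j : Fin n, j ≠ k → z j ∉ lens) :
    ∀ x ∈ Set.Ioo a b, ∀ j : Fin n, j ≠ k →
      min |x - a| |x - b| / (4*(n:ℝ)) < ‖(x : ℂ) - z j‖ := by
  intro x hx j hjk
  obtain ⟨hax, hxb⟩ := id hx
  have hn : (1 : ℝ) ≤ n := by exact_mod_cast j.pos
  have hsin := two_div_le_sin_pi_div n
  have hz : z j ∉ obreshkoffLens a b (Real.pi / (n + 2)) := by
    subst hlens; exact hothers j hjk
  have hdist := le_norm_sub_of_notMem_obreshkoffLens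
    (lt_of_lt_of_le (by positivity) hsin) hx hz
  rw [abs_sub_comm x b, abs_of_pos (sub_pos.2 hax), abs_of_pos (sub_pos.2 hxb)]
  set d := min (x - a) (b - x)
  have hd : 0 < d := lt_min (sub_pos.2 hax) (sub_pos.2 hxb)
  have hprod : d * ((b - a) / 2) ≤ (x - a) * (b - x) := by
    simpa using min_mul_add_div_two_le_mul (sub_pos.2 hax).le (sub_pos.2 hxb).le
  calc d / (4 * n) < d / (n + 2) := div_lt_div_of_pos_left hd (by positivity) (by linarith)
    _ = d * (2 / (n + 2)) / 2 := by ring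
    _ ≤ d * Real.sin (Real.pi / (n + 2)) / 2 := by gcongr
    _ ≤ (x - a) * (b - x) * Real.sin (Real.pi / (n + 2)) / (b - a) := by
        rw [div_le_div_iff₀ two_pos (by linarith)]
        nlinarith [hsin, (by positivity : (0 : ℝ) < 2 / (n + 2))]
    _ ≤ ‖(x : ℂ) - z j‖ := hdist

/-- if the Obreshkoff lens L_n of I = (a,b) (the interior of the
    intersection of the two disks through a and b whose centers see [a,b] under the
    angle 2π/(n+2)) contains the root z_k and no other root of the square-free
    polynomial P, then for every x ∈ I and every root z_j with j ≠ k,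
    |x - z_j| > min(|x-a|,|x-b|)/(4n). -/
theorem stmt19 (n : ℕ) (hn : 2 ≤ n) (p : Polynomial ℝ) (hdeg : p.natDegree = n)
    (hsq : Squarefree p) (z : Fin n → ℂ)
    (hfact : p.map (algebraMap ℝ ℂ) =
      Polynomial.C ((p.leadingCoeff : ℝ) : ℂ) * ∏ i, (Polynomial.X - Polynomial.C (z i)))
    (a b : ℝ) (hab : a < b) (k : Fin n)
    (lens : Set ℂ)
    (hlens : lens = {w : ℂ |
      ‖w - ((((a+b)/2 : ℝ) : ℂ) +
          (((b-a)/2 / Real.tan (Real.pi / (n+2)) : ℝ) : ℂ) * Complex.I)‖ <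
        (b-a)/(2 * Real.sin (Real.pi / (n+2))) ∧
      ‖w - ((((a+b)/2 : ℝ) : ℂ) -
          (((b-a)/2 / Real.tan (Real.pi / (n+2)) : ℝ) : ℂ) * Complex.I)‖ <
        (b-a)/(2 * Real.sin (Real.pi / (n+2)))})
    (hk : z k ∈ lens) (hothers : ∀ j : Fin n, j ≠ k → z j ∉ lens) :
    ∀ x ∈ Set.Ioo a b, ∀ j : Fin n, j ≠ k →
      min |x - a| |x - b| / (4*(n:ℝ)) < ‖(x : ℂ) - z j‖ :=
  stmt19_general n z a b k lens hlens hothers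
end
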